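/- arXiv:1503.00797 — 3 statements merged into one kernel-verified Lean document; each statement's English description precedes it below -/
import Mathlib

section
/- Let α(z) = Σ_{i=1}^∞ a_i z^i be a complex power series without constant term with radius of convergence R > 0, let U ⊆ ℝ^d be open, let M ⊆ U be compact, and let k ≥ 1 be an integer. Then there exist functions β_1, …, β_k : [0,R) → [0,∞), each given by a convergent power series with radius of convergence at least R (depending only on α, k, n and d), such that for every C^∞ map A : U → M_n(ℂ) with ‖A‖_M < R one has ‖α(A)‖_{M,k} ≤ Σ_{i=1}^k β_i(‖A‖_M) · (‖A‖_{M,k})^i, where α(A)(x) = Σ_{i=1}^∞ a_i A(x)^i (which converges on a neighbourhood of M). -/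
open scoped ENNReal NNReal Topology

/-- The seminorm `‖A‖_{M,k}`: the maximum (supremum) over `0 ≤ j ≤ k` of the supremum over
`x ∈ M` of the norm of the `j`-th iterated Fréchet derivative of `A` at `x`.
In particular `‖A‖_{M,0} = sup_{x ∈ M} ‖A x‖`. -/
noncomputable def seminormMk {d : ℕ} {𝔸 : Type*} [NormedAddCommGroup 𝔸] [NormedSpace ℝ 𝔸]
    (A : EuclideanSpace ℝ (Fin d) → 𝔸) (M : Set (EuclideanSpace ℝ (Fin d))) (k : ℕ) : ℝ :=
  ⨆ j : Fin (k + 1), ⨆ x : M, ‖iteratedFDeriv ℝ (j : ℕ) A (x : EuclideanSpace ℝ (Fin d))‖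


private def myD (n i : ℕ) : ℝ := ∏ l ∈ Finset.range n, ((i : ℝ) + l + 1)

private lemma myD_nonneg (n i : ℕ) : 0 ≤ myD n i :=
  Finset.prod_nonneg fun l _ => by positivity

private lemma myD_one_le (n i : ℕ) : 1 ≤ myD n i := by
  rw [myD]
  calc (1:ℝ) = ∏ _l ∈ Finset.range n, 1 := by simp
    _ ≤ ∏ l ∈ Finset.range n, ((i : ℝ) + l + 1) :=
        Finset.prod_le_prod (by intros; norm_num) (fun l _ => by
          have h1 := Nat.cast_nonneg (α := ℝ) i
          have h2 := Nat.cast_nonneg (α := ℝ) l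
          linarith)

private lemma myD_succ (n i : ℕ) : myD (n + 1) i = myD n i * ((i : ℝ) + n + 1) := by
  rw [myD, Finset.prod_range_succ]; rfl

private lemma myD_le_pow (n i : ℕ) : myD n i ≤ ((i : ℝ) + n) ^ n := by
  rw [myD]
  calc ∏ l ∈ Finset.range n, ((i : ℝ) + l + 1)
      ≤ ∏ _l ∈ Finset.range n, ((i : ℝ) + n) := by
        refine Finset.prod_le_prod (fun l _ => by positivity) (fun l hl => ?_)
        have h1 : (l : ℝ) + 1 ≤ (n : ℝ) := by
          exact_mod_cast Nat.succ_le_of_lt (Finset.mem_range.1 hl)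
        linarith
    _ = ((i : ℝ) + n) ^ n := by rw [Finset.prod_const, Finset.card_range]

private lemma norm_derivSeries_le {E F : Type*} [NormedAddCommGroup E] [NormedSpace ℝ E]
    [NormedAddCommGroup F] [NormedSpace ℝ F] (p : FormalMultilinearSeries ℝ E F) (n : ℕ) :
    ‖p.derivSeries n‖ ≤ ((n + 1 : ℕ) : ℝ) * ‖p (n + 1)‖ := by
  rw [FormalMultilinearSeries.derivSeries, ContinuousLinearMap.compFormalMultilinearSeries_apply]
  refine (ContinuousLinearMap.norm_compContinuousMultilinearMap_le _ _).trans ?_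
  have h1 : ‖(continuousMultilinearCurryFin1 ℝ E F : (E [×1]→L[ℝ] F) →L[ℝ] E →L[ℝ] F)‖ ≤ 1 :=
    ContinuousLinearMap.opNorm_le_bound _ zero_le_one (by simp)
  have hcard : Fintype.card { s : Finset (Fin (1 + n)) // s.card = n } = n + 1 := by
    rw [Fintype.card_subtype, ← Finset.powerset_univ, ← Finset.powersetCard_eq_filter,
      Finset.card_powersetCard, ← Fintype.card, Fintype.card_fin, Nat.add_comm,
      Nat.choose_succ_self_right]
  have h2 : ‖p.changeOriginSeries 1 n‖ ≤ ((n + 1 : ℕ) : ℝ) * ‖p (1 + n)‖ := by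
    have h2' := p.nnnorm_changeOriginSeries_le_tsum 1 n
    rw [tsum_fintype] at h2'
    simp only [Finset.sum_const, Finset.card_univ, hcard] at h2'
    have h2'' := (NNReal.coe_le_coe.2 h2')
    push_cast at h2''
    simpa using h2''
  calc ‖(continuousMultilinearCurryFin1 ℝ E F : (E [×1]→L[ℝ] F) →L[ℝ] E →L[ℝ] F)‖ *
        ‖p.changeOriginSeries 1 n‖ ≤ 1 * (((n + 1 : ℕ) : ℝ) * ‖p (1 + n)‖) :=
        mul_le_mul h1 h2 (norm_nonneg (p.changeOriginSeries 1 n)) zero_le_one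
    _ = ((n + 1 : ℕ) : ℝ) * ‖p (n + 1)‖ := by rw [one_mul, Nat.add_comm 1 n]

private lemma sumD {a : ℕ → ℂ} {R : ℝ}
    (hrad : ∀ r : ℝ, 0 ≤ r → r < R → Summable fun i : ℕ => ‖a i‖ * r ^ i)
    (n : ℕ) (r : ℝ) (h0 : 0 ≤ r) (hr : r < R) :
    Summable fun j : ℕ => myD n j * ‖a (n + j)‖ * r ^ j := by
  rcases eq_or_lt_of_le h0 with h | h
  · refine summable_of_ne_finset_zero (s := {0}) fun j hj => ?_
    have hj0 : j ≠ 0 := by simpa using hj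
    rw [← h, zero_pow hj0, mul_zero]
  · set t := (r + R) / 2 with ht
    have htpos : 0 < t := by rw [ht]; linarith
    have hrt : r < t := by rw [ht]; linarith
    have htR : t < R := by rw [ht]; linarith
    have hinj : Function.Injective fun j : ℕ => n + j := fun x y hxy => by simpa using hxy
    have h1 : Summable fun j : ℕ => ‖a (n + j)‖ * t ^ j := by
      have h1a := (hrad t htpos.le htR).comp_injective hinj
      have h1b := h1a.mul_left ((t ^ n)⁻¹)
      refine h1b.congr fun j => ?_
      show (t ^ n)⁻¹ * (‖a (n + j)‖ * t ^ (n + j)) = ‖a (n + j)‖ * t ^ j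
      rw [pow_add]
      field_simp
    have hx0 : 0 ≤ r / t := by positivity
    have hx1 : r / t < 1 := (div_lt_one htpos).2 hrt
    have h2 : Summable fun j : ℕ => ((j : ℝ) + n) ^ n * (r / t) ^ j := by
      have h2a : Summable fun j : ℕ => (j : ℝ) ^ n * (r / t) ^ j :=
        summable_pow_mul_geometric_of_norm_lt_one n (by rwa [Real.norm_eq_abs, abs_of_nonneg hx0])
      have h2b : Summable fun j : ℕ => ((n : ℝ)) ^ n * (r / t) ^ j :=
        (summable_geometric_of_lt_one hx0 hx1).mul_left _
      refine Summable.of_nonneg_of_le (fun j => by positivity) (fun j => ?_)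
        (((h2a.add h2b)).mul_left ((2 : ℝ) ^ n))
      have hpow : (0 : ℝ) ≤ (r / t) ^ j := by positivity
      have hmax : ((j : ℝ) + n) ≤ 2 * max (j : ℝ) (n : ℝ) := by
        rcases le_total (j : ℝ) (n : ℝ) with h' | h'
        · rw [max_eq_right h']; linarith
        · rw [max_eq_left h']; linarith
      calc ((j : ℝ) + n) ^ n * (r / t) ^ j
          ≤ (2 ^ n * ((j : ℝ) ^ n + (n : ℝ) ^ n)) * (r / t) ^ j := by
            refine mul_le_mul_of_nonneg_right ?_ hpow
            calc ((j : ℝ) + n) ^ n ≤ (2 * max (j : ℝ) (n : ℝ)) ^ n :=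
                  pow_le_pow_left₀ (by positivity) hmax n
              _ = 2 ^ n * (max (j : ℝ) (n : ℝ)) ^ n := by rw [mul_pow]
              _ ≤ 2 ^ n * ((j : ℝ) ^ n + (n : ℝ) ^ n) := by
                  refine mul_le_mul_of_nonneg_left ?_ (by positivity)
                  rcases le_total (j : ℝ) (n : ℝ) with h' | h'
                  · rw [max_eq_right h']
                    have : (0 : ℝ) ≤ (j : ℝ) ^ n := by positivity
                    linarith
                  · rw [max_eq_left h']
                    have : (0 : ℝ) ≤ (n : ℝ) ^ n := by positivity
                    linarith
        _ = 2 ^ n * ((j : ℝ) ^ n * (r / t) ^ j + (n : ℝ) ^ n * (r / t) ^ j) := by ring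
    have hB : ∀ j : ℕ, ((j : ℝ) + n) ^ n * (r / t) ^ j
        ≤ ∑' m : ℕ, ((m : ℝ) + n) ^ n * (r / t) ^ m :=
      fun j => Summable.le_tsum h2 j fun m _ => by positivity
    set B := ∑' m : ℕ, ((m : ℝ) + n) ^ n * (r / t) ^ m with hBdef
    refine Summable.of_nonneg_of_le
      (fun j => mul_nonneg (mul_nonneg (myD_nonneg n j) (norm_nonneg _)) (pow_nonneg h0 j))
      (fun j => ?_) (h1.mul_left B)
    have e1 : r ^ j = (r / t) ^ j * t ^ j := by
      rw [div_pow]; field_simp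
    calc myD n j * ‖a (n + j)‖ * r ^ j
        = (myD n j * (r / t) ^ j) * (‖a (n + j)‖ * t ^ j) := by rw [e1]; ring
      _ ≤ B * (‖a (n + j)‖ * t ^ j) := by
          refine mul_le_mul_of_nonneg_right ?_ (by positivity)
          refine le_trans ?_ (hB j)
          exact mul_le_mul_of_nonneg_right (myD_le_pow n j) (by positivity)

universe u in
private lemma iterBound {E : Type u} [NormedAddCommGroup E] [NormedSpace ℝ E]
    {r : ℝ} :
    ∀ (n : ℕ) {F : Type u} [NormedAddCommGroup F] [NormedSpace ℝ F] [CompleteSpace F]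
      (q : FormalMultilinearSeries ℝ E F) (g : E → F) (ρ : ℝ≥0∞)
      (_h : HasFPowerSeriesOnBall g q 0 ρ) (b : ℕ → ℝ) (_hb : ∀ i, ‖q i‖ ≤ b i)
      (_hs : Summable fun i => myD n i * b (n + i) * r ^ i)
      (z : E) (_hz : ‖z‖ ≤ r) (_hzρ : (‖z‖₊ : ℝ≥0∞) < ρ),
      ‖iteratedFDeriv ℝ n g z‖ ≤ ∑' i, myD n i * b (n + i) * r ^ i := by
  intro n
  induction n with
  | zero =>
    intro F _ _ _ q g ρ h b hb hs z hz hzρ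
    have hr : 0 ≤ r := le_trans (norm_nonneg z) hz
    have hmem : z ∈ Metric.eball (0 : E) ρ := by
      rw [Metric.mem_eball, edist_zero_right]; exact hzρ
    have hsum := h.hasSum hmem
    rw [zero_add] at hsum
    have hle : ∀ i, ‖q i fun _ => z‖ ≤ myD 0 i * b (0 + i) * r ^ i := by
      intro i
      have h1 : ‖q i fun _ => z‖ ≤ ‖q i‖ * ‖z‖ ^ i := by
        refine le_trans ((q i).le_opNorm _) ?_
        rw [Fin.prod_const]
      refine h1.trans ?_
      have h2 : ‖z‖ ^ i ≤ r ^ i := pow_le_pow_left₀ (norm_nonneg z) hz i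
      have h3 : ‖q i‖ * ‖z‖ ^ i ≤ b i * r ^ i :=
        mul_le_mul (hb i) h2 (by positivity) ((norm_nonneg _).trans (hb i))
      simpa [myD, zero_add] using h3
    have hsumm : Summable fun i => ‖q i fun _ => z‖ := by
      refine Summable.of_nonneg_of_le (fun i => norm_nonneg _) hle hs
    rw [norm_iteratedFDeriv_zero, ← hsum.tsum_eq]
    exact le_trans (norm_tsum_le_tsum_norm hsumm) (Summable.tsum_le_tsum hle hsumm hs)
  | succ n ih =>
    intro F _ _ _ q g ρ h b hb hs z hz hzρ
    have hkey : ∀ i : ℕ, myD n i * (((n + i + 1 : ℕ) : ℝ) * b (n + i + 1)) * r ^ i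
        = myD (n + 1) i * b (n + 1 + i) * r ^ i := by
      intro i
      rw [show n + 1 + i = n + i + 1 by omega, myD_succ]
      push_cast
      ring
    have hb' : ∀ i, ‖q.derivSeries i‖ ≤ ((i + 1 : ℕ) : ℝ) * b (i + 1) := fun i =>
      (norm_derivSeries_le q i).trans
        (mul_le_mul_of_nonneg_left (hb (i + 1)) (by positivity))
    have hs' : Summable fun i => myD n i * (((n + i + 1 : ℕ) : ℝ) * b (n + i + 1)) * r ^ i := by
      refine hs.congr fun i => ?_
      rw [hkey i]
    have := ih q.derivSeries (fderiv ℝ g) ρ h.fderiv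
      (fun i => ((i + 1 : ℕ) : ℝ) * b (i + 1)) hb' hs' z hz hzρ
    rw [← norm_iteratedFDeriv_fderiv]
    refine this.trans (le_of_eq ?_)
    exact tsum_congr hkey

section PS
variable {𝔸 : Type*} [NormedRing 𝔸] [NormedAlgebra ℂ 𝔸] [NormOneClass 𝔸] [CompleteSpace 𝔸]
variable (a : ℕ → ℂ)

private noncomputable def pSer : FormalMultilinearSeries ℝ 𝔸 𝔸 :=
  fun i => a i • ContinuousMultilinearMap.mkPiAlgebraFin ℝ i 𝔸

private lemma pSer_norm_le (i : ℕ) : ‖pSer (𝔸 := 𝔸) a i‖ ≤ ‖a i‖ := by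
  rw [pSer]
  refine (norm_smul_le (a i) (ContinuousMultilinearMap.mkPiAlgebraFin ℝ i 𝔸)).trans ?_
  have h := ContinuousMultilinearMap.norm_mkPiAlgebraFin (𝕜 := ℝ) (n := i) (A := 𝔸)
  rw [h, mul_one]

private lemma pSer_apply (i : ℕ) (z : 𝔸) :
    (pSer (𝔸 := 𝔸) a i) (fun _ => z) = a i • z ^ i := by
  rw [pSer, ContinuousMultilinearMap.smul_apply, ContinuousMultilinearMap.mkPiAlgebraFin_apply,
    List.ofFn_const, List.prod_replicate]

private lemma pSer_radius {R : ℝ}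
    (hrad : ∀ r : ℝ, 0 ≤ r → r < R → Summable fun i : ℕ => ‖a i‖ * r ^ i) :
    ENNReal.ofReal R ≤ (pSer (𝔸 := 𝔸) a).radius := by
  refine ENNReal.le_of_forall_nnreal_lt fun t ht => ?_
  refine FormalMultilinearSeries.le_radius_of_summable _ ?_
  have htR : (t : ℝ) < R := by
    by_contra hcon
    push_neg at hcon
    exact absurd (lt_of_lt_of_le ht (by
      rw [← ENNReal.ofReal_coe_nnreal]
      exact ENNReal.ofReal_le_ofReal hcon)) (lt_irrefl _)
  refine Summable.of_nonneg_of_le (fun i => by positivity) (fun i => ?_) (hrad t t.coe_nonneg htR)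
  exact mul_le_mul_of_nonneg_right (pSer_norm_le a i) (by positivity)

private lemma pSer_hasFPS {R : ℝ} (hR : 0 < R)
    (hrad : ∀ r : ℝ, 0 ≤ r → r < R → Summable fun i : ℕ => ‖a i‖ * r ^ i) :
    HasFPowerSeriesOnBall (fun z : 𝔸 => ∑' i : ℕ, a i • z ^ i) (pSer a) 0 (ENNReal.ofReal R) := by
  have hrle := pSer_radius (𝔸 := 𝔸) a hrad
  have hpos : 0 < (pSer (𝔸 := 𝔸) a).radius :=
    lt_of_lt_of_le (by simpa using ENNReal.ofReal_pos.2 hR) hrle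
  have h := (pSer (𝔸 := 𝔸) a).hasFPowerSeriesOnBall hpos
  have hfun : (pSer (𝔸 := 𝔸) a).sum = fun z : 𝔸 => ∑' i : ℕ, a i • z ^ i := by
    funext z
    exact tsum_congr fun i => by rw [pSer_apply]
  rw [hfun] at h
  exact h.mono (ENNReal.ofReal_pos.2 hR) hrle
end PS


/-- for a complex power series `α(z) = Σ_{i≥1} a_i z^i` without constant term
and radius of convergence `R > 0`, an open `U ⊆ ℝ^d`, a compact `M ⊆ U` and an integer
`k ≥ 1`, there are functions `β_1, …, β_k : [0,R) → [0,∞)`, each given by a power series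
converging on `[0,R)` (depending only on `α`, `k`, `n`, `d`), such that every `C^∞` map
`A : U → M_n(ℂ)` with `‖A‖_M < R` satisfies
`‖α(A)‖_{M,k} ≤ Σ_{i=1}^k β_i(‖A‖_M) · (‖A‖_{M,k})^i`. -/
theorem equivariant_iso_stmt1
    {d : ℕ} {𝔸 : Type*} [NormedRing 𝔸] [NormedAlgebra ℂ 𝔸] [NormOneClass 𝔸]
    [CompleteSpace 𝔸]
    (a : ℕ → ℂ) (ha0 : a 0 = 0) (R : ℝ) (hR : 0 < R)
    (hrad : ∀ r : ℝ, 0 ≤ r → r < R → Summable fun i : ℕ => ‖a i‖ * r ^ i)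
    (U : Set (EuclideanSpace ℝ (Fin d))) (hU : IsOpen U)
    (M : Set (EuclideanSpace ℝ (Fin d))) (hM : IsCompact M) (hMU : M ⊆ U)
    (k : ℕ) (hk : 1 ≤ k) :
    ∃ c : Fin k → ℕ → ℝ,
      (∀ i : Fin k, ∀ r : ℝ, 0 ≤ r → r < R → Summable fun j : ℕ => |c i j| * r ^ j) ∧
      (∀ i : Fin k, ∀ r : ℝ, 0 ≤ r → r < R → 0 ≤ ∑' j : ℕ, c i j * r ^ j) ∧
      (∀ A : EuclideanSpace ℝ (Fin d) → 𝔸, ContDiffOn ℝ (⊤ : ℕ∞) A U →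
        seminormMk A M 0 < R →
        (∀ x ∈ M, Summable fun i : ℕ => a i • A x ^ i) ∧
        seminormMk (fun x => ∑' i : ℕ, a i • A x ^ i) M k ≤
          ∑ i : Fin k,
            (∑' j : ℕ, c i j * (seminormMk A M 0) ^ j) * (seminormMk A M k) ^ ((i : ℕ) + 1)) := by
  classical
  set γ : ℕ → ℝ := fun j => ∑ n ∈ Finset.range (k + 1), myD n j * ‖a (n + j)‖ with hγ
  set c0 : ℕ → ℝ := fun j => ‖a (1 + j)‖ + 2 * (k.factorial : ℝ) * γ j with hc0
  have hγ0 : ∀ j, 0 ≤ γ j := fun j =>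
    Finset.sum_nonneg fun n _ => mul_nonneg (myD_nonneg n j) (norm_nonneg _)
  have hc00 : ∀ j, 0 ≤ c0 j := fun j => by
    have := hγ0 j
    have h2 : (0:ℝ) ≤ 2 * (k.factorial : ℝ) * γ j := by positivity
    positivity
  -- summability helpers
  have hsumShift : ∀ r : ℝ, 0 ≤ r → r < R → Summable fun j : ℕ => ‖a (1 + j)‖ * r ^ j := by
    intro r h0 hr
    refine Summable.of_nonneg_of_le (fun j => by positivity) (fun j => ?_) (sumD hrad 1 r h0 hr)
    exact le_mul_of_one_le_left (by positivity) (myD_one_le 1 j)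
      |>.trans_eq (by ring)
  have hγsum : ∀ r : ℝ, 0 ≤ r → r < R → Summable fun j : ℕ => γ j * r ^ j := by
    intro r h0 hr
    have h1 : ∀ j : ℕ, γ j * r ^ j
        = ∑ n ∈ Finset.range (k + 1), myD n j * ‖a (n + j)‖ * r ^ j := fun j => by
      rw [hγ, Finset.sum_mul]
    refine (summable_sum (fun n _ => sumD hrad n r h0 hr)).congr fun j => (h1 j).symm
  have hc0sum : ∀ r : ℝ, 0 ≤ r → r < R → Summable fun j : ℕ => c0 j * r ^ j := by
    intro r h0 hr
    have h1 : ∀ j : ℕ, c0 j * r ^ j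
        = ‖a (1 + j)‖ * r ^ j + (2 * (k.factorial : ℝ)) * (γ j * r ^ j) := fun j => by
      rw [hc0]; ring
    exact ((hsumShift r h0 hr).add (((hγsum r h0 hr)).mul_left _)).congr fun j => (h1 j).symm
  refine ⟨fun _ => c0, ?_, ?_, ?_⟩
  · intro i r h0 hr
    exact (hc0sum r h0 hr).congr fun j => by rw [abs_of_nonneg (hc00 j)]
  · intro i r h0 hr
    exact tsum_nonneg fun j => mul_nonneg (hc00 j) (pow_nonneg h0 j)
  -- main bullet
  intro A hA hAR
  set r0 := seminormMk A M 0 with hr0def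
  set K := seminormMk A M k with hKdef
  have hKdef' : K = ⨆ j : Fin (k + 1), ⨆ x : M, ‖iteratedFDeriv ℝ (j : ℕ) A (x : _)‖ := rfl
  have hr0eq : r0 = ⨆ x : M, ‖A (x : _)‖ := by
    rw [hr0def, seminormMk]
    have h : ∀ j : Fin (0 + 1), ∀ x : M, ‖iteratedFDeriv ℝ (j : ℕ) A (x : _)‖ = ‖A (x : _)‖ := by
      intro j x
      have hj : (j : ℕ) = 0 := by omega
      rw [hj, norm_iteratedFDeriv_zero]
    calc (⨆ j : Fin (0 + 1), ⨆ x : M, ‖iteratedFDeriv ℝ (j : ℕ) A (x : _)‖)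
        = ⨆ _j : Fin (0 + 1), ⨆ x : M, ‖A (x : _)‖ :=
          iSup_congr fun j => iSup_congr fun x => h j x
      _ = ⨆ x : M, ‖A (x : _)‖ := ciSup_const
  have hcont : ∀ j : ℕ, ContinuousOn (fun y => iteratedFDeriv ℝ j A y) U := by
    intro j
    have h1 := hA.continuousOn_iteratedFDerivWithin (m := j) (by exact_mod_cast le_top) hU.uniqueDiffOn
    exact h1.congr fun y hy => (iteratedFDerivWithin_of_isOpen j hU hy).symm
  have hbdd : ∀ j : ℕ, BddAbove (Set.range fun x : M => ‖iteratedFDeriv ℝ j A (x : _)‖) := by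
    intro j
    obtain ⟨C, hC⟩ := hM.exists_bound_of_continuousOn ((hcont j).mono hMU)
    exact ⟨C, by rintro y ⟨x, rfl⟩; exact hC x x.2⟩
  have hK0 : 0 ≤ K := by
    rw [hKdef']
    exact Real.iSup_nonneg fun j => Real.iSup_nonneg fun x => norm_nonneg _
  have hjK : ∀ j : ℕ, j ≤ k → ∀ x ∈ M, ‖iteratedFDeriv ℝ j A x‖ ≤ K := by
    intro j hj x hx
    have h1 : ‖iteratedFDeriv ℝ j A x‖ ≤ ⨆ y : M, ‖iteratedFDeriv ℝ j A (y : _)‖ :=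
      le_ciSup (hbdd j) ⟨x, hx⟩
    refine h1.trans ?_
    rw [hKdef']
    exact le_ciSup (f := fun j : Fin (k + 1) => ⨆ x : M, ‖iteratedFDeriv ℝ (j : ℕ) A (x : _)‖)
      (Set.Finite.bddAbove (Set.finite_range _)) (⟨j, by omega⟩ : Fin (k + 1))
  have hAx : ∀ x ∈ M, ‖A x‖ ≤ r0 := by
    intro x hx
    rw [hr0eq]
    obtain ⟨C, hC⟩ := hM.exists_bound_of_continuousOn (hA.continuousOn.mono hMU)
    exact le_ciSup (⟨C, by rintro y ⟨z, rfl⟩; exact hC z z.2⟩ :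
      BddAbove (Set.range fun x : M => ‖A (x : _)‖)) ⟨x, hx⟩
  have hr00 : 0 ≤ r0 := by
    rw [hr0eq]; exact Real.iSup_nonneg fun x => norm_nonneg _
  have hr0R : r0 < R := hAR
  have hr0K : r0 ≤ K := by
    rw [hr0eq]
    refine Real.iSup_le (fun x => ?_) hK0
    have := hjK 0 (by omega) x x.2
    rwa [norm_iteratedFDeriv_zero] at this
  -- pointwise norm bounds for the series terms
  have hptw : ∀ x ∈ M, ∀ i : ℕ, ‖a i • A x ^ i‖ ≤ ‖a i‖ * r0 ^ i := by
    intro x hx i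
    rcases Nat.eq_zero_or_pos i with hi | hi
    · subst hi; simp [ha0]
    · rw [norm_smul]
      refine mul_le_mul_of_nonneg_left ?_ (norm_nonneg _)
      refine (norm_pow_le' (A x) hi).trans ?_
      exact pow_le_pow_left₀ (norm_nonneg _) (hAx x hx) i
  have hsummA : ∀ x ∈ M, Summable fun i : ℕ => a i • A x ^ i := fun x hx =>
    Summable.of_norm_bounded (hrad r0 hr00 hr0R) (hptw x hx)
  refine ⟨hsummA, ?_⟩
  -- the function f
  set f : 𝔸 → 𝔸 := fun z => ∑' i : ℕ, a i • z ^ i with hfdef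
  have hfp : HasFPowerSeriesOnBall f (pSer a) 0 (ENNReal.ofReal R) := pSer_hasFPS a hR hrad
  have hFA : (fun x => ∑' i : ℕ, a i • A x ^ i) = f ∘ A := rfl
  -- derivative bounds for f
  set S : ℕ → ℝ := fun n => ∑' j : ℕ, myD n j * ‖a (n + j)‖ * r0 ^ j with hSdef
  set Cr : ℝ := ∑ n ∈ Finset.range (k + 1), S n with hCrdef
  have hS0 : ∀ n, 0 ≤ S n := fun n => tsum_nonneg fun j =>
    mul_nonneg (mul_nonneg (myD_nonneg n j) (norm_nonneg _)) (pow_nonneg hr00 j)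
  have hCr0 : 0 ≤ Cr := Finset.sum_nonneg fun n _ => hS0 n
  have hSCr : ∀ i : ℕ, i ≤ k → S i ≤ Cr := fun i hi =>
    Finset.single_le_sum (fun n _ => hS0 n) (Finset.mem_range.2 (by omega))
  have hfb : ∀ n : ℕ, ∀ z : 𝔸, ‖z‖ ≤ r0 → ‖iteratedFDeriv ℝ n f z‖ ≤ S n := by
    intro n z hz
    have hzρ : (‖z‖₊ : ℝ≥0∞) < ENNReal.ofReal R := by
      rw [show (‖z‖₊ : ℝ≥0∞) = ENNReal.ofReal ‖z‖ from (ofReal_norm z).symm]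
      exact (ENNReal.ofReal_lt_ofReal_iff hR).2 (lt_of_le_of_lt hz hr0R)
    have hI := iterBound (E := 𝔸) (r := r0) n (F := 𝔸) (pSer a) f (ENNReal.ofReal R) hfp
      (fun i => ‖a i‖) (pSer_norm_le a)
    have hI2 := hI (sumD hrad n r0 hr00 hr0R)
    have hI3 := hI2 z hz hzρ
    exact hI3
  -- the open sets
  set V : Set (EuclideanSpace ℝ (Fin d)) := U ∩ A ⁻¹' Metric.ball (0 : 𝔸) R with hVdef
  have hVopen : IsOpen V := hA.continuousOn.isOpen_inter_preimage hU Metric.isOpen_ball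
  have hMV : M ⊆ V := fun x hx =>
    ⟨hMU hx, by simpa [Metric.mem_ball, dist_zero_right] using lt_of_le_of_lt (hAx x hx) hr0R⟩
  set T : Set 𝔸 := Metric.eball (0 : 𝔸) (ENNReal.ofReal R) with hTdef
  have hTopen : IsOpen T := Metric.isOpen_eball
  have hmaps : Set.MapsTo A V T := by
    intro x hx
    have h1 : ‖A x‖ < R := by simpa [Metric.mem_ball, dist_zero_right] using hx.2
    rw [hTdef, Metric.mem_eball, edist_zero_right, ← ofReal_norm]
    exact (ENNReal.ofReal_lt_ofReal_iff hR).2 h1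
  have hfT : ContDiffOn ℝ (⊤ : ℕ∞) f T := hfp.analyticOnNhd.contDiffOn_of_completeSpace
  have hAV : ContDiffOn ℝ (⊤ : ℕ∞) A V := hA.mono Set.inter_subset_left
  -- key composition bound
  have hkey : ∀ m : ℕ, m ≤ k → ∀ x, x ∈ M → ∀ Dv : ℝ,
      (∀ i : ℕ, 1 ≤ i → i ≤ m → ‖iteratedFDeriv ℝ i A x‖ ≤ Dv ^ i) →
      ‖iteratedFDeriv ℝ m (f ∘ A) x‖ ≤ (m.factorial : ℝ) * Cr * Dv ^ m := by
    intro m hm x hx Dv hDv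
    have hxV : x ∈ V := hMV hx
    have hAxT : A x ∈ T := hmaps hxV
    have h := norm_iteratedFDerivWithin_comp_le (𝕜 := ℝ) (g := f) (f := A)
      (N := ((⊤ : ℕ∞) : WithTop ℕ∞)) (n := m) hfT hAV (by exact_mod_cast (le_top : (m : ℕ∞) ≤ ⊤)) hTopen.uniqueDiffOn hVopen.uniqueDiffOn
      hmaps hxV (C := Cr) (D := Dv)
      (fun i hi => by
        rw [iteratedFDerivWithin_of_isOpen i hTopen hAxT]
        exact (hfb i (A x) (hAx x hx)).trans (hSCr i (by omega)))
      (fun i h1 h2 => by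
        rw [iteratedFDerivWithin_of_isOpen i hVopen hxV]
        exact hDv i h1 h2)
    rwa [iteratedFDerivWithin_of_isOpen m hVopen hxV] at h
  -- value of beta
  set Tr : ℝ := ∑' j : ℕ, ‖a (1 + j)‖ * r0 ^ j with hTrdef
  have hTr0 : 0 ≤ Tr := tsum_nonneg fun j => by positivity
  have hTrsum := hsumShift r0 hr00 hr0R
  have hCr' : ∑' j : ℕ, γ j * r0 ^ j = Cr := by
    have h1 : ∀ j : ℕ, γ j * r0 ^ j
        = ∑ n ∈ Finset.range (k + 1), myD n j * ‖a (n + j)‖ * r0 ^ j := fun j => by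
      rw [hγ, Finset.sum_mul]
    rw [tsum_congr h1, Summable.tsum_finsetSum fun n _ => sumD hrad n r0 hr00 hr0R]
  have hβ : (∑' j : ℕ, c0 j * r0 ^ j) = Tr + 2 * (k.factorial : ℝ) * Cr := by
    have h1 : ∀ j : ℕ, c0 j * r0 ^ j
        = ‖a (1 + j)‖ * r0 ^ j + (2 * (k.factorial : ℝ)) * (γ j * r0 ^ j) := fun j => by
      rw [hc0]; ring
    rw [tsum_congr h1, Summable.tsum_add hTrsum ((hγsum r0 hr00 hr0R).mul_left _), tsum_mul_left, hCr']
  set β : ℝ := ∑' j : ℕ, c0 j * r0 ^ j with hβdef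
  have hβ0 : 0 ≤ β := tsum_nonneg fun j => mul_nonneg (hc00 j) (pow_nonneg hr00 j)
  set RHS : ℝ := ∑ i : Fin k, β * K ^ ((i : ℕ) + 1) with hRHSdef
  have hRHS0 : 0 ≤ RHS := Finset.sum_nonneg fun i _ => mul_nonneg hβ0 (pow_nonneg hK0 _)
  have hterm : ∀ i : Fin k, β * K ^ ((i : ℕ) + 1) ≤ RHS := fun i =>
    Finset.single_le_sum (f := fun i : Fin k => β * K ^ ((i : ℕ) + 1))
      (fun i _ => mul_nonneg hβ0 (pow_nonneg hK0 _)) (Finset.mem_univ i)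
  -- m = 0 bound
  have hm0 : ∀ x ∈ M, ‖f (A x)‖ ≤ Tr * K := by
    intro x hx
    have hsm : Summable fun i : ℕ => ‖a i • A x ^ i‖ :=
      Summable.of_nonneg_of_le (fun i => norm_nonneg _) (hptw x hx) (hrad r0 hr00 hr0R)
    have h1 : ‖f (A x)‖ ≤ ∑' i : ℕ, ‖a i‖ * r0 ^ i :=
      (norm_tsum_le_tsum_norm hsm).trans (Summable.tsum_le_tsum (hptw x hx) hsm (hrad r0 hr00 hr0R))
    have h2 : (∑' i : ℕ, ‖a i‖ * r0 ^ i) = Tr * r0 := by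
      rw [Summable.tsum_eq_zero_add (hrad r0 hr00 hr0R)]
      simp only [ha0, norm_zero, zero_mul, zero_add]
      rw [hTrdef, ← tsum_mul_right]
      exact tsum_congr fun j => by rw [Nat.add_comm 1 j, pow_succ]; ring
    refine h1.trans ?_
    rw [h2]
    exact mul_le_mul_of_nonneg_left hr0K hTr0
  -- main estimate
  rw [hFA]
  show seminormMk (f ∘ A) M k ≤ RHS
  rw [seminormMk]
  refine ciSup_le fun j => ?_
  refine Real.iSup_le (fun x => ?_) hRHS0
  set m := (j : ℕ) with hmdef
  have hm : m ≤ k := by omega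
  by_cases hmz : m = 0
  · rw [hmz, norm_iteratedFDeriv_zero]
    have h1 : ‖(f ∘ A) (x : _)‖ ≤ Tr * K := hm0 x x.2
    refine h1.trans ?_
    have hTrβ : Tr ≤ β := by
      rw [hβ]
      have h2 : (0:ℝ) ≤ 2 * (k.factorial : ℝ) * Cr := by positivity
      linarith
    have h2 : Tr * K ≤ β * K := mul_le_mul_of_nonneg_right hTrβ hK0
    refine h2.trans ?_
    have h3 := hterm ⟨0, by omega⟩
    simpa using h3
  · have hm1 : 1 ≤ m := by omega
    have hfacle : (m.factorial : ℝ) ≤ (k.factorial : ℝ) := by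
      exact_mod_cast Nat.factorial_le hm
    have hfCrβ : (m.factorial : ℝ) * Cr ≤ β := by
      rw [hβ]
      have h1 : (m.factorial : ℝ) * Cr ≤ (k.factorial : ℝ) * Cr :=
        mul_le_mul_of_nonneg_right hfacle hCr0
      have h2 : (0:ℝ) ≤ (k.factorial : ℝ) * Cr := by positivity
      linarith
    rcases le_or_gt K 0 with hKle | hKpos
    · have hKeq : K = 0 := le_antisymm hKle hK0
      refine le_trans ?_ hRHS0
      refine le_of_forall_pos_le_add fun ε hε => ?_
      set P : ℝ := (m.factorial : ℝ) * Cr with hP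
      have hPnn : 0 ≤ P := by positivity
      set Dv : ℝ := min 1 (ε / (P + 1)) with hDvdef
      have hDv0 : 0 ≤ Dv := le_min zero_le_one (by positivity)
      have h := hkey m hm x x.2 Dv (fun i h1 h2 => by
        have hK' := hjK i (h2.trans hm) x x.2
        rw [hKeq] at hK'
        exact hK'.trans (pow_nonneg hDv0 i))
      rw [zero_add]
      refine h.trans ?_
      calc P * Dv ^ m ≤ P * Dv := mul_le_mul_of_nonneg_left
            (pow_le_of_le_one hDv0 (min_le_left _ _) (by omega)) hPnn
        _ ≤ P * (ε / (P + 1)) := mul_le_mul_of_nonneg_left (min_le_right _ _) hPnn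
        _ ≤ ε := by
            rw [← mul_div_assoc, div_le_iff₀ (by linarith : (0:ℝ) < P + 1)]
            nlinarith
    · rcases le_or_gt 1 K with hK1 | hKlt1
      · have h := hkey m hm x x.2 K (fun i h1 h2 =>
          (hjK i (h2.trans hm) x x.2).trans (le_self_pow₀ hK1 (by omega)))
        refine h.trans ?_
        have h1 : (m.factorial : ℝ) * Cr * K ^ m ≤ β * K ^ m :=
          mul_le_mul_of_nonneg_right hfCrβ (pow_nonneg hK0 m)
        refine h1.trans ?_
        have h2 := hterm ⟨m - 1, by omega⟩
        simpa [show m - 1 + 1 = m by omega] using h2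
      · set Dv : ℝ := K ^ ((m : ℝ)⁻¹) with hDvdef
        have hmpos : (0:ℝ) < m := by exact_mod_cast hm1
        have hDvpow : ∀ i : ℕ, 1 ≤ i → i ≤ m → K ≤ Dv ^ i := by
          intro i h1 h2
          have he : Dv ^ i = K ^ ((m : ℝ)⁻¹ * i) := by
            rw [hDvdef, ← Real.rpow_natCast (K ^ ((m:ℝ)⁻¹)) i, ← Real.rpow_mul hK0]
          rw [he]
          nth_rewrite 1 [← Real.rpow_one K]
          refine Real.rpow_le_rpow_of_exponent_ge hKpos hKlt1.le ?_
          calc (m : ℝ)⁻¹ * i ≤ (m : ℝ)⁻¹ * m := by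
                refine mul_le_mul_of_nonneg_left ?_ (by positivity)
                exact_mod_cast h2
            _ = 1 := inv_mul_cancel₀ (ne_of_gt hmpos)
        have hDvm : Dv ^ m = K := by
          rw [hDvdef, ← Real.rpow_natCast (K ^ ((m:ℝ)⁻¹)) m, ← Real.rpow_mul hK0,
            inv_mul_cancel₀ (ne_of_gt hmpos), Real.rpow_one]
        have h := hkey m hm x x.2 Dv (fun i h1 h2 =>
          (hjK i (h2.trans hm) x x.2).trans (hDvpow i h1 h2))
        rw [hDvm] at h
        refine h.trans ?_
        have h1 : (m.factorial : ℝ) * Cr * K ≤ β * K :=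
          mul_le_mul_of_nonneg_right hfCrβ hK0
        refine h1.trans ?_
        have h2 := hterm ⟨0, by omega⟩
        simpa using h2
end

section
/- Let α(z) = Σ_{i=1}^∞ a_i z^i be a complex power series without constant term with radius of convergence R > 0, let U ⊆ ℝ^d be open and M ⊆ U compact. Then for every integer k ≥ 0 and every ε > 0 there is a δ > 0 such that every C^∞ map A : U → M_n(ℂ) with ‖A‖_{M,k} < δ satisfies ‖A‖_M < R (so that α(A)(x) = Σ_{i=1}^∞ a_i A(x)^i converges on a neighbourhood of M) and ‖α(A)‖_{M,k} < ε. -/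
open Set Filter Finset Manifold

lemma seminormMk_nonneg {d : ℕ} {𝔸 : Type*} [NormedAddCommGroup 𝔸] [NormedSpace ℝ 𝔸]
    (A : EuclideanSpace ℝ (Fin d) → 𝔸) (M : Set (EuclideanSpace ℝ (Fin d))) (k : ℕ) :
    0 ≤ seminormMk A M k :=
  Real.iSup_nonneg fun _ => Real.iSup_nonneg fun _ => norm_nonneg _

lemma seminormMk_le {d : ℕ} {𝔸 : Type*} [NormedAddCommGroup 𝔸] [NormedSpace ℝ 𝔸]
    {A : EuclideanSpace ℝ (Fin d) → 𝔸} {M : Set (EuclideanSpace ℝ (Fin d))} {k : ℕ} {c : ℝ}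
    (hc : 0 ≤ c) (h : ∀ j ≤ k, ∀ x ∈ M, ‖iteratedFDeriv ℝ j A x‖ ≤ c) :
    seminormMk A M k ≤ c :=
  Real.iSup_le (fun j => Real.iSup_le (fun x => h j (Nat.lt_succ_iff.mp j.2) x x.2) hc) hc

lemma norm_le_seminormMk {d : ℕ} {𝔸 : Type*} [NormedAddCommGroup 𝔸] [NormedSpace ℝ 𝔸]
    {A : EuclideanSpace ℝ (Fin d) → 𝔸} {U M : Set (EuclideanSpace ℝ (Fin d))} {k : ℕ}
    (hU : IsOpen U) (hM : IsCompact M) (hMU : M ⊆ U)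
    (hA : ContDiffOn ℝ (⊤ : ℕ∞) A U) {j : ℕ} (hj : j ≤ k) {x} (hx : x ∈ M) :
    ‖iteratedFDeriv ℝ j A x‖ ≤ seminormMk A M k := by
  have hcont : ContinuousOn (fun y => ‖iteratedFDeriv ℝ j A y‖) U := by
    have h1 : ContinuousOn (iteratedFDerivWithin ℝ j A U) U :=
      hA.continuousOn_iteratedFDerivWithin (by exact_mod_cast le_top) hU.uniqueDiffOn
    exact (h1.congr fun y hy => (iteratedFDerivWithin_of_isOpen j hU hy).symm).norm
  have hb : BddAbove (Set.range fun y : M => ‖iteratedFDeriv ℝ j A (y : EuclideanSpace ℝ (Fin d))‖) := by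
    have := (hM.image_of_continuousOn (hcont.mono hMU)).bddAbove
    rwa [Set.image_eq_range] at this
  have h1 : ‖iteratedFDeriv ℝ j A x‖ ≤ ⨆ y : M, ‖iteratedFDeriv ℝ j A (y : EuclideanSpace ℝ (Fin d))‖ :=
    le_ciSup hb (⟨x, hx⟩ : M)
  refine h1.trans ?_
  have h2 := le_ciSup (Set.Finite.bddAbove (Set.finite_range
      (fun j : Fin (k+1) => ⨆ y : M, ‖iteratedFDeriv ℝ (j : ℕ) A (y : EuclideanSpace ℝ (Fin d))‖)))
    (⟨j, Nat.lt_succ_of_le hj⟩ : Fin (k+1))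
  simpa [seminormMk] using h2

lemma iteratedFDeriv_congr_nhds {E F : Type*} [NormedAddCommGroup E] [NormedSpace ℝ E]
    [NormedAddCommGroup F] [NormedSpace ℝ F] {f g : E → F} {x : E}
    (h : f =ᶠ[nhds x] g) (n : ℕ) : iteratedFDeriv ℝ n f x = iteratedFDeriv ℝ n g x := by
  simp only [← iteratedFDerivWithin_univ]
  exact Filter.EventuallyEq.iteratedFDerivWithin_eq (by rwa [nhdsWithin_univ]) h.eq_of_nhds n

lemma pow_deriv_bound {E 𝔸 : Type*} [NormedAddCommGroup E] [NormedSpace ℝ E]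
    [NormedRing 𝔸] [NormedAlgebra ℝ 𝔸]
    {B : E → 𝔸} (hB : ContDiff ℝ (⊤ : ℕ∞) B) (k : ℕ) {x : E} {δ T : ℝ}
    (hδ : 0 < δ) (hδT : δ ≤ T) (h0 : ‖B x‖ ≤ δ)
    (hT : ∀ m, m ≤ k → ‖iteratedFDeriv ℝ m B x‖ ≤ T) :
    ∀ i : ℕ, 1 ≤ i → ∀ j : ℕ, j ≤ k →
      ‖iteratedFDeriv ℝ j (fun y => B y ^ i) x‖ ≤ (2^k * T / δ)^j * (i : ℝ)^j * δ^i := by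
  set c : ℝ := 2^k * T / δ with hc
  have hT0 : (0:ℝ) < T := hδ.trans_le hδT
  have h2k : (1:ℝ) ≤ 2^k := one_le_pow₀ (by norm_num)
  have hc1 : 1 ≤ c := by
    rw [hc, mul_div_assoc]
    have h1 : (1:ℝ) ≤ T / δ := (one_le_div hδ).2 hδT
    nlinarith
  have hc0 : (0:ℝ) ≤ c := zero_le_one.trans hc1
  have hcδ : T ≤ c * δ := by
    rw [hc, div_mul_cancel₀ _ hδ.ne']
    nlinarith
  intro i hi
  induction i, hi using Nat.le_induction with
  | base =>
    intro j hj
    have heq : (fun y => B y ^ 1) = B := funext fun y => pow_one _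
    rw [heq]
    rcases Nat.eq_zero_or_pos j with rfl | hj1
    · simpa [norm_iteratedFDeriv_zero] using h0
    · have h1 : ‖iteratedFDeriv ℝ j B x‖ ≤ T := hT j hj
      have h2 : c ≤ c ^ j := le_self_pow₀ hc1 (by omega)
      calc ‖iteratedFDeriv ℝ j B x‖ ≤ T := h1
        _ ≤ c * δ := hcδ
        _ ≤ c ^ j * δ := by gcongr
        _ = c ^ j * ((1:ℕ):ℝ)^j * δ^1 := by norm_num
  | succ i hi IH =>
    intro j hj
    have heq : (fun y => B y ^ (i+1)) = fun y => (B y ^ i) * (B y) :=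
      funext fun y => pow_succ _ _
    rw [heq]
    have hmul := norm_iteratedFDeriv_mul_le (𝕜 := ℝ) (hB.pow i) hB x
      (n := j) (by exact_mod_cast le_top)
    refine hmul.trans ?_
    have hstep : ∀ m ∈ Finset.range (j+1),
        (j.choose m : ℝ) * ‖iteratedFDeriv ℝ m (fun y => B y ^ i) x‖ *
          ‖iteratedFDeriv ℝ (j - m) B x‖ ≤
        (j.choose m : ℝ) * (i:ℝ)^m * (c^j * δ^(i+1)) := by
      intro m hm
      have hmj : m ≤ j := Nat.lt_succ_iff.mp (Finset.mem_range.mp hm)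
      have hIH := IH m (hmj.trans hj)
      rcases eq_or_lt_of_le hmj with rfl | hmlt
      · have h00 : ‖iteratedFDeriv ℝ (m - m) B x‖ = ‖B x‖ := by
          rw [Nat.sub_self]
          exact norm_iteratedFDeriv_zero
        rw [h00]
        calc (m.choose m : ℝ) * ‖iteratedFDeriv ℝ m (fun y => B y ^ i) x‖ * ‖B x‖
            ≤ (m.choose m : ℝ) * (c^m * (i:ℝ)^m * δ^i) * δ := by gcongr
          _ = (m.choose m : ℝ) * (i:ℝ)^m * (c^m * δ^(i+1)) := by ring
          _ ≤ (m.choose m : ℝ) * (i:ℝ)^m * (c^m * δ^(i+1)) := le_rfl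
      · have hjm : j - m ≤ k := le_trans (Nat.sub_le _ _) hj
        have hDB : ‖iteratedFDeriv ℝ (j - m) B x‖ ≤ T := hT _ hjm
        calc (j.choose m : ℝ) * ‖iteratedFDeriv ℝ m (fun y => B y ^ i) x‖ *
              ‖iteratedFDeriv ℝ (j - m) B x‖
            ≤ (j.choose m : ℝ) * (c^m * (i:ℝ)^m * δ^i) * T := by gcongr
          _ = ((j.choose m : ℝ) * (i:ℝ)^m * δ^i) * (c^m * T) := by ring
          _ ≤ ((j.choose m : ℝ) * (i:ℝ)^m * δ^i) * (c^j * δ) := by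
              refine mul_le_mul_of_nonneg_left ?_ (by positivity)
              have h1 : c^m * T ≤ c^(m+1) * δ := by
                rw [pow_succ, mul_assoc]
                exact mul_le_mul_of_nonneg_left hcδ (pow_nonneg hc0 m)
              refine h1.trans ?_
              have h2 : c^(m+1) ≤ c^j := pow_le_pow_right₀ hc1 (by omega)
              gcongr
          _ = (j.choose m : ℝ) * (i:ℝ)^m * (c^j * δ^(i+1)) := by ring
    calc ∑ m ∈ Finset.range (j+1), (j.choose m : ℝ) *
          ‖iteratedFDeriv ℝ m (fun y => B y ^ i) x‖ * ‖iteratedFDeriv ℝ (j - m) B x‖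
        ≤ ∑ m ∈ Finset.range (j+1), (j.choose m : ℝ) * (i:ℝ)^m * (c^j * δ^(i+1)) :=
          Finset.sum_le_sum hstep
      _ = (∑ m ∈ Finset.range (j+1), (i:ℝ)^m * (1:ℝ)^(j-m) * (j.choose m)) *
            (c^j * δ^(i+1)) := by
          rw [Finset.sum_mul]
          exact Finset.sum_congr rfl fun m hm => by ring
      _ = ((i:ℝ) + 1)^j * (c^j * δ^(i+1)) := by rw [← add_pow]
      _ = c^j * ((i+1 : ℕ):ℝ)^j * δ^(i+1) := by push_cast; ring

set_option maxHeartbeats 2000000 in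
/-- for a complex power series `α(z) = Σ_{i≥1} a_i z^i` without constant term
and radius of convergence `R > 0`, an open `U ⊆ ℝ^d` and a compact `M ⊆ U`: for every
`k ≥ 0` and `ε > 0` there is a `δ > 0` such that every `C^∞` map `A : U → M_n(ℂ)` with
`‖A‖_{M,k} < δ` satisfies `‖A‖_M < R` (so `α(A)` converges on a neighbourhood of `M`) and
`‖α(A)‖_{M,k} < ε`. -/
theorem equivariant_iso_stmt2
    {d : ℕ} {𝔸 : Type*} [NormedRing 𝔸] [NormedAlgebra ℂ 𝔸] [NormOneClass 𝔸]
    [CompleteSpace 𝔸]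
    (a : ℕ → ℂ) (ha0 : a 0 = 0) (R : ℝ) (hR : 0 < R)
    (hrad : ∀ r : ℝ, 0 ≤ r → r < R → Summable fun i : ℕ => ‖a i‖ * r ^ i)
    (U : Set (EuclideanSpace ℝ (Fin d))) (hU : IsOpen U)
    (M : Set (EuclideanSpace ℝ (Fin d))) (hM : IsCompact M) (hMU : M ⊆ U)
    (k : ℕ) (ε : ℝ) (hε : 0 < ε) :
    ∃ δ : ℝ, 0 < δ ∧
      ∀ A : EuclideanSpace ℝ (Fin d) → 𝔸, ContDiffOn ℝ (⊤ : ℕ∞) A U →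
        seminormMk A M k < δ →
        seminormMk A M 0 < R ∧
        (∃ V : Set (EuclideanSpace ℝ (Fin d)), IsOpen V ∧ M ⊆ V ∧
          ∀ x ∈ V, Summable fun i : ℕ => a i • A x ^ i) ∧
        seminormMk (fun x => ∑' i : ℕ, a i • A x ^ i) M k < ε := by
  classical
  set u : ℝ := min R 1 with hu
  have hu0 : 0 < u := lt_min hR one_pos
  have huR : u ≤ R := min_le_left _ _
  set r : ℝ := u / 2 with hrdef
  set r' : ℝ := 3 * u / 4 with hr'def
  have hr0 : 0 < r := by positivity
  have hrR : r < R := lt_of_lt_of_le (by rw [hrdef]; linarith) huR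
  have hr'0 : (0:ℝ) ≤ r' := by positivity
  have hr'R : r' < R := lt_of_lt_of_le (by rw [hr'def]; linarith) huR
  -- summability with polynomial weight
  have hq : Summable (fun n : ℕ => (n:ℝ)^k * (2/3 : ℝ)^n) :=
    summable_pow_mul_geometric_of_norm_lt_one k
      (by rw [Real.norm_eq_abs, abs_of_nonneg (by norm_num : (0:ℝ) ≤ 2/3)]; norm_num)
  obtain ⟨C0, hC0⟩ := hq.tendsto_atTop_zero.bddAbove_range
  have hC0' : ∀ n : ℕ, (n:ℝ)^k * (2/3:ℝ)^n ≤ C0 := fun n => hC0 (Set.mem_range_self n)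
  have hS : Summable (fun i : ℕ => ‖a i‖ * ((i:ℝ)^k * r^i)) := by
    refine Summable.of_nonneg_of_le (fun i => by positivity) (fun i => ?_)
      ((hrad r' hr'0 hr'R).mul_left C0)
    have hrq : r = (2/3) * r' := by rw [hrdef, hr'def]; ring
    calc ‖a i‖ * ((i:ℝ)^k * r^i)
        = ((i:ℝ)^k * (2/3)^i) * (‖a i‖ * r'^i) := by rw [hrq, mul_pow]; ring
      _ ≤ C0 * (‖a i‖ * r'^i) :=
          mul_le_mul_of_nonneg_right (hC0' i) (by positivity)
  set S : ℝ := ∑' i, ‖a i‖ * ((i:ℝ)^k * r^i) with hSdef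
  have hS0 : 0 ≤ S := tsum_nonneg fun i => by positivity
  set Ck : ℝ := 2^(k*k) with hCkdef
  have hCk1 : (1:ℝ) ≤ Ck := one_le_pow₀ one_le_two
  have hCk0 : (0:ℝ) < Ck := by positivity
  set δ : ℝ := min r (r * ε / (Ck * 2 * (S+1))) with hδdef
  have hδ0 : 0 < δ := lt_min hr0 (by positivity)
  have hδr : δ ≤ r := min_le_left _ _
  have hδ2 : δ ≤ r * ε / (Ck * 2 * (S+1)) := min_le_right _ _
  have hδR : δ < R := lt_of_le_of_lt hδr hrR
  clear_value S δ
  clear hδdef hu hrdef hr'def hq hC0' hC0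
  refine ⟨δ, hδ0, ?_⟩
  intro A hAsm hsem
  have hA : ContDiffOn ℝ ((⊤:ℕ∞)) A U := hAsm.of_le (by simp)
  -- the neighbourhood of M where all derivatives of A up to order k are < δ
  set W : Set (EuclideanSpace ℝ (Fin d)) :=
    ⋂ j ∈ Finset.range (k+1), {x | x ∈ U ∧ ‖iteratedFDerivWithin ℝ j A U x‖ < δ} with hWdef
  have hWopen : IsOpen W := by
    refine isOpen_biInter_finset fun j hj => ?_
    have hcont : ContinuousOn (fun y => ‖iteratedFDerivWithin ℝ j A U y‖) U :=
      (hA.continuousOn_iteratedFDerivWithin (by exact_mod_cast le_top) hU.uniqueDiffOn).norm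
    have h2 := hcont.isOpen_inter_preimage hU isOpen_Iio (t := Set.Iio δ)
    convert h2 using 1
    rfl
  have hWU : W ⊆ U := fun x hx =>
    (Set.mem_iInter₂.mp hx 0 (Finset.mem_range.mpr (Nat.succ_pos k))).1
  have hWd : ∀ x ∈ W, ∀ j, j ≤ k → ‖iteratedFDeriv ℝ j A x‖ < δ := by
    intro x hx j hj
    obtain ⟨h1a, h1b⟩ := Set.mem_iInter₂.mp hx j (Finset.mem_range.mpr (Nat.lt_succ_of_le hj))
    rwa [iteratedFDerivWithin_of_isOpen j hU h1a] at h1b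
  have hMW : M ⊆ W := by
    intro x hx
    refine Set.mem_iInter₂.mpr fun j hj => ⟨hMU hx, ?_⟩
    rw [iteratedFDerivWithin_of_isOpen j hU (hMU hx)]
    calc ‖iteratedFDeriv ℝ j A x‖ ≤ seminormMk A M k :=
          norm_le_seminormMk hU hM hMU hA (Nat.lt_succ_iff.mp (Finset.mem_range.mp hj)) hx
      _ < δ := hsem
  -- conclusion 1
  have hconc1 : seminormMk A M 0 < R := by
    have h01 : seminormMk A M 0 ≤ seminormMk A M k := by
      refine Real.iSup_le (fun j => ?_) (seminormMk_nonneg _ _ _)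
      have hj0 : (j:ℕ) = 0 := by omega
      rw [hj0]
      refine Real.iSup_le (fun x => ?_) (seminormMk_nonneg _ _ _)
      exact norm_le_seminormMk hU hM hMU hA (Nat.zero_le k) x.2
    exact lt_of_lt_of_le (h01.trans_lt hsem) hδR.le
  -- conclusion 2
  have hconc2 : ∀ x ∈ W, Summable fun i : ℕ => a i • A x ^ i := by
    intro x hx
    have hAx : ‖A x‖ ≤ δ := by
      have h := hWd x hx 0 (Nat.zero_le k)
      rw [norm_iteratedFDeriv_zero] at h
      exact h.le
    refine Summable.of_norm (Summable.of_nonneg_of_le (fun i => norm_nonneg _)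
      (fun i => ?_) (hrad δ hδ0.le hδR))
    rw [norm_smul]
    rcases Nat.eq_zero_or_pos i with rfl | hi
    · simp [ha0]
    · calc ‖a i‖ * ‖A x ^ i‖ ≤ ‖a i‖ * ‖A x‖^i := by
            gcongr
            exact norm_pow_le' _ hi
        _ ≤ ‖a i‖ * δ^i := by
            gcongr
  -- smooth cutoff
  obtain ⟨L, hLc, hML, hLW⟩ := exists_compact_between hM hWopen hMW
  obtain ⟨χ, hχ1, hχ0, hχ01⟩ := exists_contMDiffMap_one_nhds_of_subset_interior
      (𝓘(ℝ, EuclideanSpace ℝ (Fin d))) hM.isClosed hML (n := (⊤:ℕ∞))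
  have hχsm : ContDiff ℝ ((⊤:ℕ∞)) (χ : EuclideanSpace ℝ (Fin d) → ℝ) := χ.contMDiff.contDiff
  set B : EuclideanSpace ℝ (Fin d) → 𝔸 := fun x => χ x • A x with hBdef
  have hBL : ∀ x ∉ L, B x = 0 := fun x hx => by
    simp only [hBdef, hχ0 x hx, zero_smul]
  have hB : ContDiff ℝ ((⊤:ℕ∞)) B := by
    rw [contDiff_iff_contDiffAt]
    intro x
    by_cases hx : x ∈ L
    · exact (hχsm.contDiffAt).smul (hA.contDiffAt (hU.mem_nhds (hWU (hLW hx))))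
    · have hev : B =ᶠ[nhds x] (fun _ => (0:𝔸)) := by
        filter_upwards [hLc.isClosed.isOpen_compl.mem_nhds hx] with y hy
        exact hBL y hy
      exact (contDiffAt_const (c := (0:𝔸))).congr_of_eventuallyEq hev
  have hBsupp : HasCompactSupport B := HasCompactSupport.intro hLc hBL
  have hB0 : ∀ x, ‖B x‖ ≤ δ := by
    intro x
    by_cases hx : x ∈ L
    · have hAx : ‖A x‖ ≤ δ := by
        have h := hWd x (hLW hx) 0 (Nat.zero_le k)
        rw [norm_iteratedFDeriv_zero] at h
        exact h.le
      calc ‖B x‖ = ‖χ x‖ * ‖A x‖ := norm_smul _ _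
        _ ≤ 1 * δ := by
            refine mul_le_mul ?_ hAx (norm_nonneg _) zero_le_one
            rw [Real.norm_eq_abs, abs_le]
            exact ⟨by linarith [(hχ01 x).1], (hχ01 x).2⟩
        _ = δ := one_mul δ
    · rw [hBL x hx]
      simpa using hδ0.le
  -- neighbourhood where χ = 1
  obtain ⟨V₁, hV₁o, hMV₁, hχV₁⟩ := eventually_nhdsSet_iff_exists.mp hχ1
  have hABV : ∀ y ∈ V₁ ∩ W, B y = A y := fun y hy => by
    rw [hBdef]; simp only [hχV₁ y hy.1, one_smul]
  -- global bound on derivatives of B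
  have hTex : ∀ j : Fin (k+1), ∃ C, ∀ x, ‖iteratedFDeriv ℝ (j:ℕ) B x‖ ≤ C := fun j =>
    (hB.continuous_iteratedFDeriv (by exact_mod_cast le_top)).bounded_above_of_compact_support
      (hBsupp.iteratedFDeriv _)
  choose CT hCT using hTex
  clear_value B
  set T : ℝ := δ + ∑ j : Fin (k+1), max (CT j) 0 with hTdef
  have hδT : δ ≤ T :=
    le_add_of_nonneg_right (Finset.sum_nonneg fun j _ => le_max_right _ _)
  have hT : ∀ m, m ≤ k → ∀ x, ‖iteratedFDeriv ℝ m B x‖ ≤ T := by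
    intro m hm x
    have h1 : ‖iteratedFDeriv ℝ m B x‖ ≤ CT ⟨m, Nat.lt_succ_of_le hm⟩ :=
      hCT ⟨m, Nat.lt_succ_of_le hm⟩ x
    have h3 : max (CT ⟨m, Nat.lt_succ_of_le hm⟩) 0 ≤ ∑ j : Fin (k+1), max (CT j) 0 :=
      Finset.single_le_sum (f := fun j => max (CT j) 0)
        (fun j _ => le_max_right _ _) (Finset.mem_univ _)
    have h2 : CT ⟨m, Nat.lt_succ_of_le hm⟩ ≤ max (CT ⟨m, Nat.lt_succ_of_le hm⟩) 0 :=
      le_max_left _ _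
    have h4 : (0:ℝ) < δ := hδ0
    rw [hTdef]
    linarith
  clear_value T
  clear hTdef hCT
  -- the series of functions
  have hfc : ∀ i : ℕ, ContDiff ℝ ((k:ℕ∞)) (fun x => a i • B x ^ i) := fun i =>
    ((hB.pow i).const_smul (a i)).of_le (by exact_mod_cast le_top)
  set c : ℝ := 2^k * T / δ with hcdef
  have hc1 : (1:ℝ) ≤ c := by
    rw [hcdef, mul_div_assoc]
    have h1 : (1:ℝ) ≤ T / δ := (one_le_div hδ0).2 hδT
    have h2 : (1:ℝ) ≤ 2^k := one_le_pow₀ one_le_two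
    nlinarith
  have hc0 : (0:ℝ) ≤ c := zero_le_one.trans hc1
  have hδder : ∀ (j i : ℕ) (x), j ≤ k →
      ‖iteratedFDeriv ℝ j (fun y => a i • B y ^ i) x‖ ≤ ‖a i‖ * (c^j * (i:ℝ)^j * δ^i) := by
    intro j i x hj
    have hsmul : iteratedFDeriv ℝ j (fun y => a i • B y ^ i) x
        = a i • iteratedFDeriv ℝ j (fun y => B y ^ i) x :=
      iteratedFDeriv_const_smul_apply' ((hB.pow i).contDiffAt.of_le (by exact_mod_cast le_top))
    rw [hsmul, norm_smul]
    rcases Nat.eq_zero_or_pos i with rfl | hi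
    · simp [ha0]
    · have hbd : ‖iteratedFDeriv ℝ j (fun y => B y ^ i) x‖ ≤ c^j * (i:ℝ)^j * δ^i := by
        rw [hcdef]
        exact pow_deriv_bound hB k hδ0 hδT (hB0 x) (fun m hm => hT m hm x) i hi j hj
      exact mul_le_mul_of_nonneg_left hbd (norm_nonneg _)
  clear_value c
  clear hcdef
  have hv : ∀ j : ℕ, (j:ℕ∞) ≤ (k:ℕ∞) →
      Summable (fun i : ℕ => ‖a i‖ * (c^j * (i:ℝ)^j * δ^i)) := by
    intro j hjc
    have hj : j ≤ k := by exact_mod_cast hjc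
    refine Summable.of_nonneg_of_le (fun i => by positivity) (fun i => ?_) (hS.mul_left (c^k))
    rcases Nat.eq_zero_or_pos i with rfl | hi
    · simp [ha0]
    · have hia : (1:ℝ) ≤ (i:ℝ) := by exact_mod_cast hi
      calc ‖a i‖ * (c^j * (i:ℝ)^j * δ^i) ≤ ‖a i‖ * (c^k * (i:ℝ)^k * r^i) := by
            gcongr
        _ = c^k * (‖a i‖ * ((i:ℝ)^k * r^i)) := by ring
  have hswap : ∀ j, j ≤ k → ∀ x, iteratedFDeriv ℝ j (fun y => ∑' i, a i • B y ^ i) x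
      = ∑' i, iteratedFDeriv ℝ j (fun y => a i • B y ^ i) x := by
    intro j hj x
    exact iteratedFDeriv_tsum_apply (f := fun i y => a i • B y ^ i) hfc hv
      (fun m i x hm => hδder m i x (by exact_mod_cast hm)) (by exact_mod_cast hj) x
  -- conclusion 3
  have hconc3 : seminormMk (fun x => ∑' i : ℕ, a i • A x ^ i) M k < ε := by
    refine lt_of_le_of_lt (seminormMk_le (c := Ck * ((δ/r) * S)) (by positivity) ?_) ?_
    · intro j hj x hx
      have hxV₂ : x ∈ V₁ ∩ W := ⟨hMV₁ hx, hMW hx⟩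
      have hmemV₂ : V₁ ∩ W ∈ nhds x := (hV₁o.inter hWopen).mem_nhds hxV₂
      have hFG : iteratedFDeriv ℝ j (fun y => ∑' i, a i • A y ^ i) x
          = iteratedFDeriv ℝ j (fun y => ∑' i, a i • B y ^ i) x := by
        refine iteratedFDeriv_congr_nhds ?_ j
        filter_upwards [hmemV₂] with y hy
        exact tsum_congr fun i => by rw [hABV y hy]
      rw [hFG, hswap j hj x]
      have hptT : ∀ m, m ≤ k → ‖iteratedFDeriv ℝ m B x‖ ≤ δ := by
        intro m hm
        have hBA : iteratedFDeriv ℝ m B x = iteratedFDeriv ℝ m A x := by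
          refine iteratedFDeriv_congr_nhds ?_ m
          filter_upwards [hmemV₂] with y hy using hABV y hy
        rw [hBA]
        exact (hWd x (hMW hx) m hm).le
      have hpt := pow_deriv_bound hB k hδ0 le_rfl (hB0 x) hptT
      have hterm : ∀ i : ℕ, ‖iteratedFDeriv ℝ j (fun y => a i • B y ^ i) x‖
          ≤ Ck * (‖a i‖ * ((i:ℝ)^k * δ^i)) := by
        intro i
        have hsmul : iteratedFDeriv ℝ j (fun y => a i • B y ^ i) x
            = a i • iteratedFDeriv ℝ j (fun y => B y ^ i) x :=
          iteratedFDeriv_const_smul_apply' ((hB.pow i).contDiffAt.of_le (by exact_mod_cast le_top))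
        rw [hsmul, norm_smul]
        rcases Nat.eq_zero_or_pos i with rfl | hi
        · simp [ha0]
        · have h1 := hpt i hi j hj
          have hdd : (2^k * δ/δ : ℝ) = 2^k := by
            rw [mul_div_assoc, div_self hδ0.ne', mul_one]
          rw [hdd] at h1
          have hia : (1:ℝ) ≤ (i:ℝ) := by exact_mod_cast hi
          calc ‖a i‖ * ‖iteratedFDeriv ℝ j (fun y => B y ^ i) x‖
              ≤ ‖a i‖ * (((2:ℝ)^k)^j * (i:ℝ)^j * δ^i) :=
                mul_le_mul_of_nonneg_left h1 (norm_nonneg _)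
            _ ≤ ‖a i‖ * (Ck * (i:ℝ)^k * δ^i) := by
                gcongr
                · rw [hCkdef, ← pow_mul]
                  exact pow_le_pow_right₀ one_le_two (Nat.mul_le_mul_left k hj)
            _ = Ck * (‖a i‖ * ((i:ℝ)^k * δ^i)) := by ring
      have hsum1 : Summable (fun i : ℕ => ‖iteratedFDeriv ℝ j (fun y => a i • B y ^ i) x‖) :=
        Summable.of_nonneg_of_le (fun i => norm_nonneg _)
          (fun i => hδder j i x hj) (hv j (by exact_mod_cast hj))
      have hsumδ : Summable (fun i : ℕ => ‖a i‖ * ((i:ℝ)^k * δ^i)) := by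
        refine Summable.of_nonneg_of_le (fun i => by positivity) (fun i => ?_) hS
        gcongr
      calc ‖∑' i, iteratedFDeriv ℝ j (fun y => a i • B y ^ i) x‖
          ≤ ∑' i, ‖iteratedFDeriv ℝ j (fun y => a i • B y ^ i) x‖ := norm_tsum_le_tsum_norm hsum1
        _ ≤ ∑' i, Ck * (‖a i‖ * ((i:ℝ)^k * δ^i)) :=
            Summable.tsum_le_tsum hterm hsum1 (hsumδ.mul_left Ck)
        _ = Ck * ∑' i, (‖a i‖ * ((i:ℝ)^k * δ^i)) := tsum_mul_left
        _ ≤ Ck * ((δ/r) * S) := by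
            refine mul_le_mul_of_nonneg_left ?_ hCk0.le
            have heq : ∑' i, ((δ/r) * (‖a i‖ * ((i:ℝ)^k * r^i))) = (δ/r) * S := by
              rw [hSdef]
              exact tsum_mul_left
            rw [← heq]
            refine Summable.tsum_le_tsum (fun i => ?_) hsumδ (hS.mul_left _)
            rcases Nat.eq_zero_or_pos i with rfl | hi
            · simp [ha0]
            · obtain ⟨n, rfl⟩ := Nat.exists_eq_add_of_le hi
              have hpow : δ^(1+n) ≤ (δ/r) * r^(1+n) := by
                have h5 : (δ/r) * r^(1+n) = δ * r^n := by
                  rw [pow_add, pow_one]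
                  field_simp
                rw [h5, pow_add, pow_one]
                gcongr
              calc ‖a (1+n)‖ * (((1+n:ℕ):ℝ)^k * δ^(1+n))
                  ≤ ‖a (1+n)‖ * (((1+n:ℕ):ℝ)^k * ((δ/r) * r^(1+n))) := by gcongr
                _ = (δ/r) * (‖a (1+n)‖ * (((1+n:ℕ):ℝ)^k * r^(1+n))) := by ring
    · -- Ck * ((δ/r)*S) < ε
      have h1 : δ / r ≤ ε / (Ck*2*(S+1)) := by
        rw [div_le_div_iff₀ hr0 (by positivity)]
        calc δ * (Ck*2*(S+1)) ≤ (r * ε / (Ck * 2 * (S+1))) * (Ck*2*(S+1)) := by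
              gcongr
          _ = ε * r := by field_simp
      calc Ck * ((δ/r)*S) ≤ Ck * ((ε/(Ck*2*(S+1))) * S) := by
            gcongr
          _ = ε * (S/(2*(S+1))) := by field_simp
          _ < ε := by
            have h2 : S/(2*(S+1)) < 1 := (div_lt_one (by positivity)).2 (by linarith)
            nlinarith
  exact ⟨hconc1, ⟨W, hWopen, hMW, hconc2⟩, hconc3⟩
end

section
/- Let π : E → E′ be a continuous linear surjection of Fréchet spaces. Let B be a closed subset of a compact Hausdorff topological space A. Suppose we have continuous maps f′ : A → E′ and h : B → E such that π(h(b)) = f′(b) for all b ∈ B. Then there is a continuous map f : A → E which extends h (f(b) = h(b) for all b ∈ B) and satisfies π ∘ f = f′. -/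
open Set Filter Topology Pointwise Uniformity

section basisSeq

variable {E : Type*} [AddCommGroup E] [Module ℝ E] [TopologicalSpace E]
  [IsTopologicalAddGroup E] [ContinuousSMul ℝ E] [LocallyConvexSpace ℝ E]
  [FirstCountableTopology E]

theorem frechet_basis_seq :
    ∃ U : ℕ → Set E, (∀ n, IsOpen (U n)) ∧ (∀ n, (0:E) ∈ U n) ∧ (∀ n, Convex ℝ (U n)) ∧
      (∀ n, ∀ x ∈ U n, -x ∈ U n) ∧ (∀ n, U (n+1) + U (n+1) ⊆ U n) ∧
      (∀ s ∈ 𝓝 (0:E), ∃ n, U n ⊆ s) := by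
  obtain ⟨V, hV⟩ := (𝓝 (0:E)).exists_antitone_basis
  have pick : ∀ s : Set E, s ∈ 𝓝 (0:E) → ∀ m : ℕ, ∃ t : Set E,
      (IsOpen t ∧ (0:E) ∈ t ∧ Convex ℝ t ∧ Balanced ℝ t) ∧ t + t ⊆ s ∧ t ⊆ V m := by
    intro s hs m
    obtain ⟨w, hw, hws⟩ := exists_nhds_zero_half (inter_mem hs (hV.mem m))
    obtain ⟨t, ⟨ht0, htop, htb, htc⟩, hts⟩ := (nhds_hasBasis_absConvex_open ℝ E).mem_iff.1 hw
    refine ⟨t, ⟨htop, ht0, htc, htb⟩, ?_, ?_⟩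
    · rintro x ⟨a, ha, b, hb, rfl⟩
      exact (hws a (hts ha) b (hts hb)).1
    · intro x hx
      simpa using (hws x (hts hx) 0 (hts ht0)).2
  choose! T hT1 hT2 hT3 using pick
  let P : Set E → Prop := fun t => IsOpen t ∧ (0:E) ∈ t ∧ Convex ℝ t ∧ Balanced ℝ t
  have hmem : ∀ t : Set E, P t → t ∈ 𝓝 (0:E) := fun t ht => ht.1.mem_nhds ht.2.1
  let U0 : {t : Set E // P t} := ⟨T univ 0, hT1 _ univ_mem 0⟩
  let F : ℕ → {t : Set E // P t} → {t : Set E // P t} := fun n t =>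
    ⟨T t.1 (n+1), hT1 _ (hmem _ t.2) (n+1)⟩
  let U : ℕ → {t : Set E // P t} := fun n => Nat.rec U0 F n
  refine ⟨fun n => (U n).1, fun n => (U n).2.1, fun n => (U n).2.2.1, fun n => (U n).2.2.2.1,
    fun n x hx => ?_, fun n => ?_, fun s hs => ?_⟩
  · simpa using (U n).2.2.2.2.smul_mem (a := (-1 : ℝ)) (by norm_num) hx
  · exact hT2 _ (hmem _ (U n).2) (n+1)
  · obtain ⟨m, -, hm⟩ := hV.1.mem_iff.1 hs
    exact ⟨m+1, subset_trans (hT3 _ (hmem _ (U m).2) (m+1)) (hV.2 (Nat.le_succ m) |>.trans hm |> fun h => h)⟩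

end basisSeq

section helpers

variable {G : Type*} [AddCommGroup G] [TopologicalSpace G] [IsTopologicalAddGroup G]

theorem mem_add_of_mem_closure {s t : Set G} {z : G} (hz : z ∈ closure s) (ht : t ∈ 𝓝 (0:G)) :
    z ∈ s + t := by
  have hn : {w : G | z - w ∈ t} ∈ 𝓝 z := by
    have : Filter.Tendsto (fun w => z - w) (𝓝 z) (𝓝 (z - z)) :=
      (tendsto_const_nhds.sub tendsto_id)
    rw [sub_self] at this
    exact this ht
  obtain ⟨p, hp1, hp2⟩ := (mem_closure_iff_nhds.1 hz) _ hn
  exact ⟨p, hp2, z - p, hp1, add_sub_cancel p z⟩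

end helpers

section helpers2

variable {G : Type*} [AddCommGroup G]

theorem sum_mem_shrinking {U : ℕ → Set G} (h0 : ∀ n, (0:G) ∈ U n)
    (hadd : ∀ n, U (n+1) + U (n+1) ⊆ U n) :
    ∀ (K j : ℕ) (x : ℕ → G), (∀ k, x k ∈ U (j+2+k)) → (∑ k ∈ Finset.range K, x k) ∈ U (j+1) := by
  intro K
  induction K with
  | zero => intro j x hx; simpa using h0 (j+1)
  | succ K ih =>
    intro j x hx
    rw [Finset.sum_range_succ']
    refine hadd (j+1) ⟨_, ?_, _, ?_, rfl⟩
    · have := ih (j+1) (fun k => x (k+1)) (fun k => by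
        have e : j + 1 + 2 + k = j + 2 + (k + 1) := by omega
        rw [e]; exact hx (k+1))
      simpa using this
    · simpa using hx 0

theorem shrinking_antitone {U : ℕ → Set G} (h0 : ∀ n, (0:G) ∈ U n)
    (hadd : ∀ n, U (n+1) + U (n+1) ⊆ U n) : ∀ m n, m ≤ n → U n ⊆ U m := by
  have hsucc : ∀ n, U (n+1) ⊆ U n := fun n x hx =>
    hadd n ⟨x, hx, 0, h0 _, by simp⟩
  intro m n hmn
  induction hmn with
  | refl => exact subset_rfl
  | step _ ih => exact (hsucc _).trans ih

end helpers2

section cauchy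

variable {E : Type*} [AddCommGroup E] [UniformSpace E] [IsUniformAddGroup E]

theorem cauchySeq_of_shrinking {U : ℕ → Set E}
    (hsymm : ∀ n, ∀ x ∈ U n, -x ∈ U n)
    (hanti : ∀ m n, m ≤ n → U n ⊆ U m)
    (hbasis : ∀ s ∈ 𝓝 (0:E), ∃ n, U n ⊆ s)
    (u : ℕ → E) (hu : ∀ n m, n ≤ m → u m - u n ∈ U n) : CauchySeq u := by
  rw [cauchySeq_iff]
  intro V hV
  rw [uniformity_eq_comap_nhds_zero E, Filter.mem_comap] at hV
  obtain ⟨S, hS, hSV⟩ := hV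
  obtain ⟨n, hn⟩ := hbasis S hS
  refine ⟨n, fun k hk l hl => hSV ?_⟩
  simp only [mem_preimage]
  rcases le_total k l with hkl | hlk
  · exact hn (hanti n k hk (hu k l hkl))
  · have := hsymm l _ (hu l k hlk)
    rw [neg_sub] at this
    exact hn (hanti n l hl this)

end cauchy

section openmap

variable {E E' : Type*}
    [AddCommGroup E] [Module ℝ E] [UniformSpace E] [IsUniformAddGroup E]
    [ContinuousSMul ℝ E] [LocallyConvexSpace ℝ E]
    [TopologicalSpace.MetrizableSpace E] [CompleteSpace E]
    [AddCommGroup E'] [Module ℝ E'] [UniformSpace E'] [IsUniformAddGroup E']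
    [ContinuousSMul ℝ E'] [LocallyConvexSpace ℝ E']
    [TopologicalSpace.MetrizableSpace E'] [CompleteSpace E']

theorem frechet_uniformity_countably_generated : (𝓤 E').IsCountablyGenerated := by
  rw [uniformity_eq_comap_nhds_zero E']
  exact Filter.comap.isCountablyGenerated _ _

/-- Closure of the image of a convex symmetric neighborhood of zero is a neighborhood. -/
theorem frechet_closure_image_nhds (π : E →L[ℝ] E') (hπ : Function.Surjective π)
    {t : Set E} (htc : Convex ℝ t) (hts : ∀ x ∈ t, -x ∈ t) (htn : t ∈ 𝓝 (0:E)) :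
    closure (π '' t) ∈ 𝓝 (0:E') := by
  haveI : (𝓤 E').IsCountablyGenerated := frechet_uniformity_countably_generated
  letI : PseudoMetricSpace E' := UniformSpace.pseudoMetricSpace E'
  haveI : BaireSpace E' := inferInstance
  set S : Set E' := π '' t with hS
  have hSconv : Convex ℝ S := htc.linear_image π.toLinearMap
  have hSsymm : ∀ y ∈ S, -y ∈ S := by
    rintro y ⟨x, hx, rfl⟩
    exact ⟨-x, hts x hx, by simp⟩
  -- Baire category argument
  have hcover : (⋃ n : ℕ, closure (((n:ℝ)+1) • S)) = univ := by
    refine eq_univ_of_forall fun y => ?_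
    obtain ⟨x, rfl⟩ := hπ y
    obtain ⟨r, hr⟩ := absorbs_iff_norm.1 ((absorbent_nhds_zero (𝕜 := ℝ) htn) x)
    obtain ⟨n, hn⟩ := exists_nat_ge r
    have hxin : x ∈ ((n:ℝ)+1) • t := by
      refine hr ((n:ℝ)+1) ?_ rfl
      rw [Real.norm_eq_abs, abs_of_nonneg (by positivity)]
      linarith
    obtain ⟨z, hz, rfl⟩ := hxin
    refine mem_iUnion.2 ⟨n, subset_closure ?_⟩
    exact ⟨π z, ⟨z, hz, rfl⟩, by simp⟩
  obtain ⟨n, hn⟩ := nonempty_interior_of_iUnion_of_closed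
    (fun n : ℕ => isClosed_closure (s := ((n:ℝ)+1) • S)) hcover
  have hne : ((n:ℝ)+1) ≠ 0 := by positivity
  rw [closure_smul₀' hne, interior_smul₀ hne] at hn
  obtain ⟨z, hz⟩ := smul_set_nonempty.1 hn
  -- use convexity and symmetry to get 0 in the interior
  have hcs : Convex ℝ (closure S) := hSconv.closure
  have hzneg : -z ∈ closure S := by
    have hz' : z ∈ closure S := interior_subset hz
    have hSS : -S = S := by
      ext y
      simp only [Set.mem_neg]
      exact ⟨fun hy => by simpa using hSsymm _ hy, fun hy => hSsymm y hy⟩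
    have hmem : -z ∈ -closure S := Set.neg_mem_neg.2 hz'
    rwa [neg_closure, hSS] at hmem
  have h0 : (0:E') ∈ interior (closure S) := by
    have := hcs.combo_interior_closure_mem_interior hz (subset_closure hzneg)
      (a := (1/2:ℝ)) (b := (1/2:ℝ)) (by norm_num) (by norm_num) (by norm_num)
    simpa using this
  exact mem_nhds_iff.2 ⟨interior (closure S), interior_subset, isOpen_interior, h0⟩

/-- Open mapping theorem for Fréchet spaces, in the form we need. -/
theorem frechet_open_map (π : E →L[ℝ] E') (hπ : Function.Surjective π) {s : Set E}
    (hs : s ∈ 𝓝 (0:E)) : π '' s ∈ 𝓝 (0:E') := by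
  obtain ⟨U, hUo, hU0, hUc, hUs, hUa, hUb⟩ := frechet_basis_seq (E := E)
  have hnhds : ∀ n, U n ∈ 𝓝 (0:E) := fun n => (hUo n).mem_nhds (hU0 n)
  have hCn : ∀ n, closure (π '' U n) ∈ 𝓝 (0:E') := fun n =>
    frechet_closure_image_nhds π hπ (hUc n) (hUs n) (hnhds n)
  have hanti := shrinking_antitone hU0 hUa
  have key : ∀ n, closure (π '' U (n+2)) ⊆ π '' U n := by
    intro n y₀ hy₀
    have hrec : ∀ (k : ℕ) (y : E'), y ∈ closure (π '' U (n+2+k)) →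
        ∃ x, x ∈ U (n+2+k) ∧ y - π x ∈ closure (π '' U (n+2+(k+1))) := by
      intro k y hy
      have hN : closure (π '' U (n+2+(k+1))) ∈ 𝓝 (0:E') := hCn _
      obtain ⟨p, ⟨x, hx, rfl⟩, q, hq, rfl⟩ := mem_add_of_mem_closure hy hN
      refine ⟨x, hx, ?_⟩
      have he : π x + q - π x = q := by abel
      rw [he]
      exact hq
    choose! X hX1 hX2 using hrec
    set Y : ℕ → E' := fun k => Nat.rec y₀ (fun k yk => yk - π (X k yk)) k with hYdef
    have hY : ∀ k, Y k ∈ closure (π '' U (n+2+k)) := by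
      intro k
      induction k with
      | zero => exact hy₀
      | succ k ih => exact hX2 k (Y k) ih
    set x : ℕ → E := fun k => X k (Y k) with hxdef
    have hx : ∀ k, x k ∈ U (n+2+k) := fun k => hX1 k (Y k) (hY k)
    set sN : ℕ → E := fun K => ∑ k ∈ Finset.range K, x k with hsNdef
    have hsum : ∀ K, sN K ∈ U (n+1) := fun K => sum_mem_shrinking hU0 hUa K n x hx
    have hcauchy : CauchySeq sN := by
      apply cauchySeq_of_shrinking hUs hanti hUb
      intro K M hKM
      have hdiff : sN M - sN K = ∑ k ∈ Finset.range (M-K), x (K+k) := by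
        have : sN M = sN K + ∑ k ∈ Finset.range (M-K), x (K+k) := by
          rw [hsNdef]
          simp only []
          rw [← Finset.sum_range_add]
          have hKM' : K + (M - K) = M := Nat.add_sub_cancel' hKM
          rw [hKM']
        rw [this]; abel
      rw [hdiff]
      have hsub : (∑ k ∈ Finset.range (M-K), x (K+k)) ∈ U (K+1) := by
        apply sum_mem_shrinking hU0 hUa (M-K) K
        intro k
        exact hanti (K+2+k) (n+2+(K+k)) (by omega) (hx (K+k))
      exact hanti K (K+1) (Nat.le_succ K) hsub
    obtain ⟨xlim, hxlim⟩ := cauchySeq_tendsto_of_complete hcauchy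
    refine ⟨xlim, ?_, ?_⟩
    · have hcl : xlim ∈ closure (U (n+1)) :=
        mem_closure_of_tendsto hxlim (Filter.Eventually.of_forall hsum)
      exact hUa n (mem_add_of_mem_closure hcl (hnhds (n+1)))
    · have h1 : Filter.Tendsto (fun K => π (sN K)) atTop (𝓝 (π xlim)) :=
        (π.continuous.tendsto xlim).comp hxlim
      have h2 : ∀ K, π (sN K) = y₀ - Y K := by
        intro K
        induction K with
        | zero => simp [hsNdef, hYdef]
        | succ K ih =>
          have e1 : sN (K+1) = sN K + x K := Finset.sum_range_succ x K
          have e2 : Y (K+1) = Y K - π (x K) := rfl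
          rw [e1, map_add, ih, e2]
          abel
      have hY0 : Filter.Tendsto Y atTop (𝓝 (0:E')) := by
        intro M hM
        obtain ⟨M', hM', hM'M⟩ := exists_nhds_zero_half hM
        have hpre : π ⁻¹' M' ∈ 𝓝 (0:E) := by
          have := π.continuous.tendsto (0:E)
          rw [map_zero] at this
          exact this hM'
        obtain ⟨j, hj⟩ := hUb _ hpre
        rw [Filter.mem_map]
        filter_upwards [Filter.eventually_ge_atTop j] with K hK
        have hYK : Y K ∈ closure (π '' U j) :=
          closure_mono (image_mono (hanti j (n+2+K) (by omega))) (hY K)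
        obtain ⟨p, hp, q, hq, hpq⟩ := mem_add_of_mem_closure hYK hM'
        obtain ⟨w, hw, rfl⟩ := hp
        rw [mem_preimage, ← hpq]
        exact hM'M _ (hj hw) _ hq
      have h3 : Filter.Tendsto (fun K => y₀ - Y K) atTop (𝓝 y₀) := by
        have := tendsto_const_nhds (x := y₀) (f := atTop (α := ℕ)) |>.sub hY0
        simpa using this
      have h4 : Filter.Tendsto (fun K => π (sN K)) atTop (𝓝 y₀) := by
        simpa only [h2] using h3
      exact tendsto_nhds_unique h1 h4
  obtain ⟨n, hn⟩ := hUb s hs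
  exact mem_of_superset (hCn (n+2)) ((key n).trans (image_mono hn))

end openmap

theorem convex_sum_mem' {V : Type*} [AddCommGroup V] [Module ℝ V] {ι : Type*} [Fintype ι]
    {C : Set V} (hC : Convex ℝ C) (h0 : (0:V) ∈ C) (c : ι → ℝ) (hc : ∀ i, 0 ≤ c i)
    (h1 : ∑ i, c i = 1) (p : ι → V) (hp : ∀ i, c i ≠ 0 → p i ∈ C) :
    (∑ i, c i • p i) ∈ C := by
  have heq : ∑ i, c i • p i = ∑ i, c i • (if c i = 0 then 0 else p i) := by
    refine Finset.sum_congr rfl fun i _ => ?_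
    by_cases h : c i = 0 <;> simp [h]
  rw [heq]
  refine hC.sum_mem (fun i _ => hc i) h1 (fun i _ => ?_)
  by_cases h : c i = 0
  · simp [h, h0]
  · simp [h, hp i h]

theorem frechet_step {E E' : Type*}
    [AddCommGroup E] [Module ℝ E] [TopologicalSpace E] [IsTopologicalAddGroup E]
    [ContinuousSMul ℝ E]
    [AddCommGroup E'] [Module ℝ E'] [TopologicalSpace E'] [IsTopologicalAddGroup E']
    [ContinuousSMul ℝ E']
    (π : E →L[ℝ] E')
    {A : Type*} [TopologicalSpace A] [CompactSpace A] [T2Space A]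
    {B : Set A} (hB : IsClosed B)
    {U : Set E} (hUc : Convex ℝ U) (hU0 : (0:E) ∈ U)
    {W : Set E'} (hWo : IsOpen W) (hWc : Convex ℝ W) (hWs : ∀ y ∈ W, -y ∈ W) (hW0 : (0:E') ∈ W)
    {U' : Set E} (hU'o : IsOpen U') (hU'c : Convex ℝ U') (hU's : ∀ x ∈ U', -x ∈ U')
    (hU'0 : (0:E) ∈ U')
    (e : A → E') (he : Continuous e) (heU : ∀ a, e a ∈ π '' U)
    (w : B → E) (hw : Continuous w) (hwπ : ∀ b, π (w b) = e b) (hwU : ∀ b, w b ∈ U) :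
    ∃ v : A → E, Continuous v ∧ (∀ a, v a ∈ U) ∧ (∀ a, π (v a) - e a ∈ W) ∧
      (∀ b : B, v b - w b ∈ U') := by
  rcases isEmpty_or_nonempty A with hA | hA
  · exact ⟨fun _ => 0, continuous_const, fun a => (IsEmpty.false a).elim,
      fun a => (IsEmpty.false a).elim, fun b => (IsEmpty.false (b:A)).elim⟩
  have hcover : ∀ a : A, ∃ (O : Set A) (x : E), IsOpen O ∧ a ∈ O ∧ x ∈ U ∧ π x = e a ∧
      (∀ a' ∈ O, e a' - e a ∈ W) ∧ (∀ b' : B, (b':A) ∈ O → w b' - x ∈ U') := by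
    intro a
    by_cases ha : a ∈ B
    · -- near B : use the value of w
      have hGopen : IsOpen (w ⁻¹' {z | z - w ⟨a, ha⟩ ∈ U'}) :=
        ((continuous_sub_right (w ⟨a, ha⟩)).isOpen_preimage U' hU'o).preimage hw
      obtain ⟨G, hGo, hGeq⟩ := isOpen_induced_iff.1 hGopen
      refine ⟨e ⁻¹' {y | y - e a ∈ W} ∩ G, w ⟨a, ha⟩,
        (((continuous_sub_right (e a)).isOpen_preimage W hWo).preimage he).inter hGo,
        ⟨by simp [hW0], ?_⟩, hwU _, hwπ _, fun a' ha' => ha'.1, ?_⟩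
      · have : (⟨a, ha⟩ : B) ∈ Subtype.val ⁻¹' G := by
          rw [hGeq]; simp [hU'0]
        exact this
      · intro b' hb'
        have : b' ∈ Subtype.val ⁻¹' G := hb'.2
        rw [hGeq] at this
        exact this
    · obtain ⟨x, hxU, hxe⟩ := heU a
      refine ⟨e ⁻¹' {y | y - e a ∈ W} ∩ Bᶜ, x,
        (((continuous_sub_right (e a)).isOpen_preimage W hWo).preimage he).inter
          hB.isOpen_compl,
        ⟨by simp [hW0], ha⟩, hxU, hxe, fun a' ha' => ha'.1, ?_⟩
      intro b' hb'
      exact absurd b'.2 hb'.2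
  choose O x hO1 hO2 hO3 hO4 hO5 hO6 using hcover
  obtain ⟨t, ht⟩ := isCompact_univ.elim_finite_subcover O hO1
    (fun a _ => mem_iUnion.2 ⟨a, hO2 a⟩)
  have hcov' : (univ : Set A) ⊆ ⋃ i : t, O i := by
    intro a ha
    obtain ⟨b, hb, hab⟩ := mem_iUnion₂.1 (ht ha)
    exact mem_iUnion.2 ⟨⟨b, hb⟩, hab⟩
  obtain ⟨f, hf⟩ := PartitionOfUnity.exists_isSubordinate (ι := t) isClosed_univ
    (fun i => O i) (fun i => hO1 i) hcov'
  set v : A → E := fun a => ∑ i : t, f i a • x i with hv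
  have hsum1 : ∀ a : A, ∑ i : t, f i a = 1 := by
    intro a
    have := f.sum_eq_one (mem_univ a)
    rwa [finsum_eq_sum_of_fintype] at this
  have hactive : ∀ (i : t) (a : A), f i a ≠ 0 → a ∈ O i := fun i a hia =>
    hf i (subset_tsupport _ (by simpa [Function.mem_support] using hia))
  refine ⟨v, ?_, ?_, ?_, ?_⟩
  · exact continuous_finset_sum _ fun i _ => ((f i).continuous).smul continuous_const
  · intro a
    exact convex_sum_mem' hUc hU0 (fun i => f i a) (fun i => f.nonneg i a) (hsum1 a)
      (fun i => x i) (fun i _ => hO3 i)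
  · intro a
    have hrw : π (v a) - e a = ∑ i : t, f i a • (e (i:A) - e a) := by
      rw [hv]
      simp only [map_sum, map_smul]
      calc (∑ i : t, f i a • π (x i)) - e a
          = (∑ i : t, f i a • π (x i)) - (∑ i : t, f i a) • e a := by rw [hsum1 a, one_smul]
        _ = ∑ i : t, (f i a • π (x i) - f i a • e a) := by
            rw [Finset.sum_smul, ← Finset.sum_sub_distrib]
        _ = ∑ i : t, f i a • (e (i:A) - e a) := by
            refine Finset.sum_congr rfl fun i _ => ?_
            rw [hO4, ← smul_sub]
    rw [hrw]
    refine convex_sum_mem' hWc hW0 (fun i => f i a) (fun i => f.nonneg i a) (hsum1 a) _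
      (fun i hia => ?_)
    have h5 := hWs _ (hO5 (i:A) a (hactive i a hia))
    rwa [neg_sub] at h5
  · intro b
    have hrw : v (b:A) - w b = ∑ i : t, f i (b:A) • (x i - w b) := by
      rw [hv]
      calc (∑ i : t, f i (b:A) • x i) - w b
          = (∑ i : t, f i (b:A) • x i) - (∑ i : t, f i (b:A)) • w b := by
            rw [hsum1 (b:A), one_smul]
        _ = ∑ i : t, (f i (b:A) • x i - f i (b:A) • w b) := by
            rw [Finset.sum_smul, ← Finset.sum_sub_distrib]
        _ = ∑ i : t, f i (b:A) • (x i - w b) := by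
            refine Finset.sum_congr rfl fun i _ => ?_
            rw [← smul_sub]
    rw [hrw]
    refine convex_sum_mem' hU'c hU'0 (fun i => f i (b:A)) (fun i => f.nonneg i (b:A))
      (hsum1 (b:A)) _ (fun i hib => ?_)
    have h6 := hU's _ (hO6 (i:A) b (hactive i (b:A) hib))
    rwa [neg_sub] at h6

theorem interior_symm_mem {G : Type*} [SubtractionMonoid G] [TopologicalSpace G]
    [ContinuousNeg G] {s : Set G} (hs : ∀ x ∈ s, -x ∈ s) :
    ∀ y ∈ interior s, -y ∈ interior s := by
  intro y hy
  have himg : (Homeomorph.neg G) '' s = s := by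
    ext z
    constructor
    · rintro ⟨u, hu, rfl⟩
      exact hs u hu
    · intro hz
      exact ⟨-z, hs z hz, by simp [Homeomorph.neg]⟩
  have := (Homeomorph.neg G).image_interior (s := s)
  rw [himg] at this
  rw [← this]
  exact ⟨y, hy, by simp [Homeomorph.neg]⟩

/-- Cartan's lifting lemma: let `π : E → E'` be a continuous linear
surjection of Fréchet spaces (real, locally convex, metrizable and complete topological
vector spaces). Let `B` be a closed subset of a compact Hausdorff space `A`, and let
`f' : A → E'` and `h : B → E` be continuous maps with `π (h b) = f' b` for all `b ∈ B`.
Then there is a continuous `f : A → E` extending `h` with `π ∘ f = f'`. -/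
theorem equivariant_iso_stmt6
    {E E' : Type*}
    [AddCommGroup E] [Module ℝ E] [UniformSpace E] [IsUniformAddGroup E]
    [ContinuousSMul ℝ E] [LocallyConvexSpace ℝ E]
    [TopologicalSpace.MetrizableSpace E] [CompleteSpace E]
    [AddCommGroup E'] [Module ℝ E'] [UniformSpace E'] [IsUniformAddGroup E']
    [ContinuousSMul ℝ E'] [LocallyConvexSpace ℝ E']
    [TopologicalSpace.MetrizableSpace E'] [CompleteSpace E']
    (π : E →L[ℝ] E') (hπ : Function.Surjective π)
    {A : Type*} [TopologicalSpace A] [CompactSpace A] [T2Space A]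
    (B : Set A) (hB : IsClosed B)
    (f' : A → E') (hf' : Continuous f')
    (h : B → E) (hh : Continuous h)
    (hcomp : ∀ b : B, π (h b) = f' b) :
    ∃ f : A → E, Continuous f ∧ (∀ b : B, f b = h b) ∧ ∀ x : A, π (f x) = f' x := by
  obtain ⟨U, hUo, hU0, hUc, hUs, hUa, hUb⟩ := frechet_basis_seq (E := E)
  have hanti := shrinking_antitone hU0 hUa
  have hnhds : ∀ n, U n ∈ 𝓝 (0:E) := fun n => (hUo n).mem_nhds (hU0 n)
  have hWn : ∀ n, π '' U n ∈ 𝓝 (0:E') := fun n => frechet_open_map π hπ (hnhds n)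
  have hSsym : ∀ n, ∀ y ∈ π '' U n, -y ∈ π '' U n := by
    rintro n y ⟨z, hz, rfl⟩
    exact ⟨-z, hUs n z hz, by simp⟩
  set W : ℕ → Set E' := fun n => interior (π '' U n) with hWdef
  have hWo : ∀ n, IsOpen (W n) := fun _ => isOpen_interior
  have hW0 : ∀ n, (0:E') ∈ W n := fun n => mem_interior_iff_mem_nhds.2 (hWn n)
  have hWc : ∀ n, Convex ℝ (W n) := fun n => ((hUc n).linear_image π.toLinearMap).interior
  have hWs : ∀ n, ∀ y ∈ W n, -y ∈ W n := fun n => interior_symm_mem (hSsym n)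
  have hWsub : ∀ n, W n ⊆ π '' U n := fun _ => interior_subset
  set P : ℕ → (A → E) → Prop := fun n g => Continuous g ∧
    (∀ a, f' a - π (g a) ∈ π '' U (n+2)) ∧ (∀ b : B, h b - g b ∈ U (n+2)) with hPdef
  -- base case
  have base : ∃ g, P 0 g := by
    obtain ⟨v, hv1, hv2, hv3, hv4⟩ := frechet_step π hB (convex_univ : Convex ℝ (univ : Set E))
      (mem_univ (0:E)) (hWo 2) (hWc 2) (hWs 2) (hW0 2) (hUo 2) (hUc 2) (hUs 2) (hU0 2)
      f' hf' (fun a => (hπ (f' a)).imp fun x hx => ⟨mem_univ x, hx⟩)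
      h hh hcomp (fun b => mem_univ _)
    refine ⟨v, hv1, fun a => ?_, fun b => ?_⟩
    · have := hSsym 2 _ (hWsub 2 (hv3 a))
      rwa [neg_sub] at this
    · have := hUs 2 _ (hv4 b)
      rwa [neg_sub] at this
  -- inductive step
  have stepP : ∀ n (g : A → E), P n g → ∃ g', P (n+1) g' ∧ ∀ a, g' a - g a ∈ U (n+2) := by
    intro n g hg
    obtain ⟨hgc, hge, hgb⟩ := hg
    obtain ⟨v, hv1, hv2, hv3, hv4⟩ := frechet_step π hB (hUc (n+2)) (hU0 (n+2))
      (hWo (n+3)) (hWc (n+3)) (hWs (n+3)) (hW0 (n+3))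
      (hUo (n+3)) (hUc (n+3)) (hUs (n+3)) (hU0 (n+3))
      (fun a => f' a - π (g a)) (hf'.sub (π.continuous.comp hgc)) hge
      (fun b => h b - g b) (hh.sub (hgc.comp continuous_subtype_val))
      (fun b => by rw [map_sub, hcomp]) hgb
    refine ⟨fun a => g a + v a, ⟨hgc.add hv1, fun a => ?_, fun b => ?_⟩,
      fun a => by simpa using hv2 a⟩
    · have h3 := hSsym (n+3) _ (hWsub (n+3) (hv3 a))
      have heq : -(π (v a) - (f' a - π (g a))) = f' a - π (g a + v a) := by
        rw [map_add]; abel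
      rw [heq] at h3
      exact h3
    · have h4 := hUs (n+3) _ (hv4 b)
      have heq : -(v (b:A) - (h b - g (b:A))) = h b - (g (b:A) + v (b:A)) := by abel
      rw [heq] at h4
      exact h4
  obtain ⟨g0, hg0⟩ := base
  choose! F hF1 hF2 using stepP
  set g : ℕ → A → E := fun n => Nat.rec g0 (fun k gk => F k gk) n with hgdef
  have hP : ∀ n, P n (g n) := by
    intro n
    induction n with
    | zero => exact hg0
    | succ n ih => exact hF1 n (g n) ih
  have hinc : ∀ n a, g (n+1) a - g n a ∈ U (n+2) := fun n a => hF2 n (g n) (hP n) a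
  have hdiff : ∀ k n a, g (n+k) a - g n a ∈ U (n+1) := by
    intro k
    induction k with
    | zero => intro n a; simpa using hU0 (n+1)
    | succ k ih =>
      intro n a
      have h1 : g (n+1+k) a - g (n+1) a ∈ U (n+2) := ih (n+1) a
      have h2 : g (n+1) a - g n a ∈ U (n+2) := hinc n a
      have heq : g (n+(k+1)) a - g n a
          = (g (n+1+k) a - g (n+1) a) + (g (n+1) a - g n a) := by
        have e : n+1+k = n+(k+1) := by omega
        rw [e]; abel
      rw [heq]
      exact hUa (n+1) ⟨_, h1, _, h2, rfl⟩
  have hdiff' : ∀ n m, n ≤ m → ∀ a, g m a - g n a ∈ U (n+1) := by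
    intro n m hnm a
    obtain ⟨k, rfl⟩ := Nat.exists_eq_add_of_le hnm
    exact hdiff k n a
  have hcauchy : ∀ a, CauchySeq (fun n => g n a) := by
    intro a
    apply cauchySeq_of_shrinking hUs hanti hUb
    intro n m hnm
    exact hanti n (n+1) (Nat.le_succ n) (hdiff' n m hnm a)
  have hlim : ∀ a, ∃ z : E, Filter.Tendsto (fun n => g n a) atTop (𝓝 z) := fun a =>
    cauchySeq_tendsto_of_complete (hcauchy a)
  choose f hf using hlim
  have hucauchy : UniformCauchySeqOn g atTop univ := by
    intro u hu
    rw [uniformity_eq_comap_nhds_zero E, Filter.mem_comap] at hu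
    obtain ⟨S, hS, hSu⟩ := hu
    obtain ⟨n₀, hn₀⟩ := hUb S hS
    filter_upwards [Filter.prod_mem_prod (Filter.eventually_ge_atTop n₀)
      (Filter.eventually_ge_atTop n₀)] with m hm a _
    obtain ⟨hk, hl⟩ := hm
    obtain ⟨k, l⟩ := m
    simp only [Set.mem_setOf_eq] at hk hl
    refine hSu ?_
    simp only [mem_preimage]
    rcases le_total k l with hkl | hlk
    · exact hn₀ (hanti n₀ (k+1) (by omega) (hdiff' k l hkl a))
    · have := hUs (l+1) _ (hdiff' l k hlk a)
      rw [neg_sub] at this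
      exact hn₀ (hanti n₀ (l+1) (by omega) this)
  have huniform : TendstoUniformlyOn g f atTop univ :=
    hucauchy.tendstoUniformlyOn_of_tendsto (fun a _ => hf a)
  have hfc : Continuous f := by
    rw [← continuousOn_univ]
    exact huniform.continuousOn (Filter.Eventually.of_forall fun n => ((hP n).1).continuousOn).frequently
  refine ⟨f, hfc, fun b => ?_, fun a => ?_⟩
  · have h1 : Filter.Tendsto (fun n => h b - g n (b:A)) atTop (𝓝 (0:E)) := by
      intro S hS
      obtain ⟨n₁, hn₁⟩ := hUb S hS
      rw [Filter.mem_map]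
      filter_upwards [Filter.eventually_ge_atTop n₁] with n hn
      exact hn₁ (hanti n₁ (n+2) (by omega) ((hP n).2.2 b))
    have h2 : Filter.Tendsto (fun n => g n (b:A)) atTop (𝓝 (h b)) := by
      have := tendsto_const_nhds (x := h b) (f := atTop (α := ℕ)) |>.sub h1
      simpa using this
    exact tendsto_nhds_unique (hf (b:A)) h2
  · have h1 : Filter.Tendsto (fun n => f' a - π (g n a)) atTop (𝓝 (0:E')) := by
      intro S hS
      obtain ⟨S', hS', hS'S⟩ := exists_nhds_zero_half hS
      have hpre : π ⁻¹' S' ∈ 𝓝 (0:E) := by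
        have := π.continuous.tendsto (0:E)
        rw [map_zero] at this
        exact this hS'
      obtain ⟨j, hj⟩ := hUb _ hpre
      rw [Filter.mem_map]
      filter_upwards [Filter.eventually_ge_atTop j] with n hn
      have hmem : f' a - π (g n a) ∈ π '' U j :=
        image_mono (hanti j (n+2) (by omega)) ((hP n).2.1 a)
      obtain ⟨z, hz, hze⟩ := hmem
      have : f' a - π (g n a) = π z + 0 := by rw [hze, add_zero]
      rw [mem_preimage, this]
      exact hS'S _ (hj hz) _ (mem_of_mem_nhds hS')
    have h2 : Filter.Tendsto (fun n => π (g n a)) atTop (𝓝 (f' a)) := by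
      have := tendsto_const_nhds (x := f' a) (f := atTop (α := ℕ)) |>.sub h1
      simpa using this
    have h3 : Filter.Tendsto (fun n => π (g n a)) atTop (𝓝 (π (f a))) :=
      (π.continuous.tendsto (f a)).comp (hf a)
    exact tendsto_nhds_unique h3 h2
end
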